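/- arXiv:2602.11768 — 5 statements merged into one kernel-verified Lean document; each statement's English description precedes it below -/
import Mathlib

section
/- Let e : ℝ → (−∞,+∞] be convex, lower semicontinuous with e(0) = e(1) = 0. Define İ(s) := sup_{α∈ℝ}(−αs − e(α)), f(u) := sup_{α∈(0,1]} α^{−1}(−(1−α)u − e(α)), g(u) := f(u) − u, s̲₀ := sup_{α∈(0,1]}(−e(α)/α) and s̲₁ := sup_{α∈[0,1)}(−e(α)/(1−α)). Then İ is strictly decreasing on the open interval (−s̲₁, s̲₀) and maps it homeomorphically onto (0, s̲₁); the inverse homeomorphism is the restriction of g to (0, s̲₁); in particular f(İ(s)) = İ(s) + s for every s ∈ (−s̲₁, s̲₀). Moreover, if s̲₀ < +∞ then g(0) = s̲₀ and İ(s̲₀) = 0, and if s̲₁ < +∞ then g(s̲₁) = −s̲₁ and İ(−s̲₁) = s̲₁. -/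
/-!
For `s ∈ (-s̲₁, s̲₀)` the convex function `ψ_s(α) = e(α) + sα` dips below both `ψ_s(0) = 0`
and `ψ_s(1) = s`, so its minimum over `[0, 1]`, attained by lower semicontinuity, sits at an
interior point `β`; by convexity it is then a global minimum and `İ(s) = -ψ_s(β)`.
Everything follows from this representation. `İ` is convex on the interval, hence continuous,
and strictly decreasing because the maximizing slope `-β` is negative; `0 < İ(s) < s̲₁` are the
inequalities `ψ_s(β) < ψ_s(0)` and `ψ_s(β) < ψ_s(1)`; and the supremum defining `f(İ(s))` is
attained at the same `β` with value `İ(s) + s`. Surjectivity onto `(0, s̲₁)` is the intermediate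
value theorem between `-y`, where `İ ≥ y`, and a point near `s̲₀` where `İ ≤ y`. When `s̲₀`
(resp. `s̲₁`) is finite, `α ↦ -s̲₀ α` (resp. `α ↦ s̲₁ (α - 1)`) is a supporting line of `e`
at `0` (resp. `1`), which gives the endpoint values.
-/
open Set

theorem isLUB_of_biSup_coe_eq {S : Set ℝ} {φ : ℝ → ℝ} {u : ℝ}
    (h : ⨆ α ∈ S, (φ α : EReal) = u) : IsLUB (φ '' S) u :=
  IsLUB.of_image EReal.coe_le_coe_iff (by rw [← image_comp, ← h]; exact isLUB_biSup)

theorem biSup_coe_eq_of_isGreatest {S : Set ℝ} {φ : ℝ → ℝ} {c : ℝ}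
    (h : IsGreatest (φ '' S) c) : ⨆ α ∈ S, (φ α : EReal) = c := by
  have h' := EReal.coe_strictMono.monotone.map_isGreatest h
  rw [image_image] at h'
  exact isLUB_biSup.unique h'.isLUB

theorem ConvexOn.exists_isMinOn_mem_Ioo {D : Set ℝ} {ψ : ℝ → ℝ} {a b : ℝ}
    (hψ : ConvexOn ℝ D ψ) (hD : Icc a b ⊆ D) (hlsc : LowerSemicontinuousOn ψ (Icc a b))
    (ha : ∃ x ∈ Icc a b, ψ x < ψ a) (hb : ∃ x ∈ Icc a b, ψ x < ψ b) :
    ∃ β ∈ Ioo a b, IsMinOn ψ D β := by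
  obtain ⟨xa, hxa, hlta⟩ := ha
  obtain ⟨xb, hxb, hltb⟩ := hb
  obtain ⟨β, hβ, hmin⟩ := hlsc.exists_isMinOn ⟨xa, hxa⟩ isCompact_Icc
  have hβ' : β ∈ Ioo a b := by
    refine ⟨hβ.1.lt_of_ne ?_, hβ.2.lt_of_ne ?_⟩
    · rintro rfl
      exact (hmin hxa).not_gt hlta
    · rintro rfl
      exact (hmin hxb).not_gt hltb
  have hloc : IsLocalMinOn ψ D β := (hmin.isLocalMin (Icc_mem_nhds hβ'.1 hβ'.2)).on D
  exact ⟨β, hβ', IsMinOn.of_isLocalMinOn_of_convexOn (hD hβ) hloc hψ⟩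

theorem ConvexOn.nonneg_of_notMem_Ioo {D : Set ℝ} {ε : ℝ → ℝ} {a b x : ℝ}
    (hε : ConvexOn ℝ D ε) (ha : a ∈ D) (hb : b ∈ D) (hab : a < b) (hεa : ε a = 0)
    (hεb : ε b = 0) (hx : x ∈ D) (hxab : x ∉ Ioo a b) : 0 ≤ ε x := by
  rcases le_or_gt x a with hxa | hax
  · rw [← hεa]
    exact hε.le_left_of_right_le'' hx hb hxa hab (by rw [hεa, hεb])
  · rw [← hεb]
    exact hε.le_right_of_left_le'' ha hx hab (not_lt.mp fun hxb => hxab ⟨hax, hxb⟩)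
      (by rw [hεa, hεb])

theorem ConvexOn.isMaxOn_zero_of_isLUB {D : Set ℝ} {ε : ℝ → ℝ} {u : ℝ}
    (hε : ConvexOn ℝ D ε) (hD : Icc 0 1 ⊆ D) (hε0 : ε 0 = 0) (hε1 : ε 1 = 0)
    (hu : IsLUB ((fun β => -ε β / β) '' Ioc 0 1) u) :
    IsMaxOn (fun α => -α * u - ε α) D 0 := by
  have hle : ∀ β ∈ Ioc (0 : ℝ) 1, -ε β / β ≤ u := fun β hβ => hu.1 ⟨β, hβ, rfl⟩
  have hu0 : 0 ≤ u := by simpa [hε1] using hle 1 ⟨one_pos, le_rfl⟩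
  refine isMaxOn_iff.mpr fun α hα => ?_
  simp only [neg_zero, zero_mul, hε0, sub_zero]
  rcases lt_or_ge α 0 with hα0 | hα0
  · have hslope : u ≤ ε α / -α := hu.2 <| by
      rintro _ ⟨β, hβ, rfl⟩
      have := hε.slope_mono_adjacent hα (hD ⟨hβ.1.le, hβ.2⟩) hα0 hβ.1
      rw [hε0, zero_sub, zero_sub, sub_zero, sub_zero, neg_div_neg_eq] at this
      change -ε β / β ≤ ε α / -α
      rw [neg_div, div_neg]
      linarith
    have := (le_div_iff₀ (neg_pos.mpr hα0)).mp hslope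
    linarith
  rcases le_or_gt α 1 with hα1 | hα1
  · rcases hα0.eq_or_lt with rfl | hαpos
    · simp [hε0]
    · have := (div_le_iff₀ hαpos).mp (hle α ⟨hαpos, hα1⟩)
      linarith
  · have := hε.nonneg_of_notMem_Ioo (hD ⟨le_rfl, zero_le_one⟩) (hD ⟨zero_le_one, le_rfl⟩)
      one_pos hε0 hε1 hα (fun h => h.2.not_gt hα1)
    nlinarith

theorem ConvexOn.isMaxOn_one_of_isLUB {D : Set ℝ} {ε : ℝ → ℝ} {u : ℝ}
    (hε : ConvexOn ℝ D ε) (hD : Icc 0 1 ⊆ D) (hε0 : ε 0 = 0) (hε1 : ε 1 = 0)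
    (hu : IsLUB ((fun β => -ε β / (1 - β)) '' Ico 0 1) u) :
    IsMaxOn (fun α => -α * -u - ε α) D 1 := by
  have hle : ∀ β ∈ Ico (0 : ℝ) 1, -ε β / (1 - β) ≤ u := fun β hβ => hu.1 ⟨β, hβ, rfl⟩
  have hu0 : 0 ≤ u := by simpa [hε0] using hle 0 ⟨le_rfl, zero_lt_one⟩
  refine isMaxOn_iff.mpr fun α hα => ?_
  simp only [hε1, sub_zero, neg_mul, one_mul, neg_neg, mul_neg]
  rcases lt_or_ge 1 α with hα1 | hα1
  · have hslope : u ≤ ε α / (α - 1) := hu.2 <| by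
      rintro _ ⟨β, hβ, rfl⟩
      have := hε.slope_mono_adjacent (hD ⟨hβ.1, hβ.2.le⟩) hα hβ.2 hα1
      rwa [hε1, zero_sub, sub_zero] at this
    have := (le_div_iff₀ (sub_pos.mpr hα1)).mp hslope
    linarith
  rcases lt_or_ge α 0 with hα0 | hα0
  · have := hε.nonneg_of_notMem_Ioo (hD ⟨le_rfl, zero_le_one⟩) (hD ⟨zero_le_one, le_rfl⟩)
      one_pos hε0 hε1 hα (fun h => h.1.not_gt hα0)
    nlinarith
  rcases hα1.eq_or_lt with rfl | hα1
  · simp [hε1]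
  · have := (div_le_iff₀ (sub_pos.mpr hα1)).mp (hle α ⟨hα0, hα1⟩)
    linarith

namespace EntropicPressure

-- `rate e`, `hoeffding e`, `sZero e` and `sOne e` are `İ`, `f`, `s̲₀` and `s̲₁`.
noncomputable def rate (e : ℝ → EReal) (s : ℝ) : EReal :=
  ⨆ α : ℝ, ((-α * s : ℝ) : EReal) - e α

noncomputable def hoeffding (e : ℝ → EReal) (u : ℝ) : EReal :=
  ⨆ α ∈ Ioc (0 : ℝ) 1, ((α⁻¹ : ℝ) : EReal) * (((-(1 - α) * u : ℝ) : EReal) - e α)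

noncomputable def sZero (e : ℝ → EReal) : EReal :=
  ⨆ α ∈ Ioc (0 : ℝ) 1, (-(e α)) * ((α⁻¹ : ℝ) : EReal)

noncomputable def sOne (e : ℝ → EReal) : EReal :=
  ⨆ α ∈ Ico (0 : ℝ) 1, (-(e α)) * (((1 - α)⁻¹ : ℝ) : EReal)

def slopeInterval (e : ℝ → EReal) : Set ℝ :=
  {s : ℝ | -sOne e < (s : EReal) ∧ (s : EReal) < sZero e}

-- `ε` stands for `e` on its effective domain `{α | e α ≠ ⊤}`; its values elsewhere are junk.
variable {e : ℝ → EReal} {ε : ℝ → ℝ}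

theorem convexOn_of_eq_coe (he : ∀ α, e α ≠ ⊤ → e α = ε α)
    (hconv : ∀ x y p q : ℝ, 0 ≤ p → 0 ≤ q → p + q = 1 →
      e (p * x + q * y) ≤ (p : EReal) * e x + (q : EReal) * e y) :
    ConvexOn ℝ {α | e α ≠ ⊤} ε := by
  have key : ∀ x ∈ {α | e α ≠ ⊤}, ∀ y ∈ {α | e α ≠ ⊤}, ∀ p q : ℝ, 0 ≤ p → 0 ≤ q → p + q = 1 →
      e (p * x + q * y) ≤ ((p * ε x + q * ε y : ℝ) : EReal) := by
    intro x hx y hy p q hp hq hpq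
    have := hconv x y p q hp hq hpq
    rwa [he x hx, he y hy, ← EReal.coe_mul, ← EReal.coe_mul, ← EReal.coe_add] at this
  have hmem : ∀ x ∈ {α | e α ≠ ⊤}, ∀ y ∈ {α | e α ≠ ⊤}, ∀ p q : ℝ, 0 ≤ p → 0 ≤ q → p + q = 1 →
      e (p * x + q * y) ≠ ⊤ := fun x hx y hy p q hp hq hpq =>
    ((key x hx y hy p q hp hq hpq).trans_lt (EReal.coe_lt_top _)).ne
  refine ⟨hmem, fun x hx y hy p q hp hq hpq => ?_⟩
  have := key x hx y hy p q hp hq hpq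
  rw [he _ (hmem x hx y hy p q hp hq hpq)] at this
  exact EReal.coe_le_coe_iff.mp this

theorem Icc_subset_dom (hε : ConvexOn ℝ {α | e α ≠ ⊤} ε) (he0 : e 0 = 0) (he1 : e 1 = 0) :
    Icc 0 1 ⊆ {α | e α ≠ ⊤} :=
  (convex_iff_ordConnected.mp hε.1).out (by simp [he0]) (by simp [he1])

theorem lowerSemicontinuousOn_of_eq_coe {S : Set ℝ} (hlsc : LowerSemicontinuous e)
    (hε : ∀ α ∈ S, e α = ε α) : LowerSemicontinuousOn ε S := by
  intro x hx y hy
  have := hlsc x y (show (y : EReal) < e x by rw [hε x hx]; exact_mod_cast hy)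
  filter_upwards [nhdsWithin_le_nhds this, self_mem_nhdsWithin] with α hlt hα
  rw [hε α hα] at hlt
  exact_mod_cast hlt

theorem coe_sub_le_rate {α r : ℝ} (h : e α = r) (s : ℝ) :
    ((-α * s - r : ℝ) : EReal) ≤ rate e s := by
  rw [EReal.coe_sub, ← h]
  exact le_iSup (fun α : ℝ => ((-α * s : ℝ) : EReal) - e α) α

theorem rate_eq_biSup (he : ∀ α, e α ≠ ⊤ → e α = ε α) (s : ℝ) :
    rate e s = ⨆ α ∈ {α | e α ≠ ⊤}, ((-α * s - ε α : ℝ) : EReal) := by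
  refine iSup_congr fun α => ?_
  by_cases hα : e α = ⊤
  · simp [hα, EReal.sub_top]
  · rw [iSup_pos (show α ∈ {α | e α ≠ ⊤} from hα), he α hα, EReal.coe_sub]

theorem rate_eq_of_isMaxOn (he : ∀ α, e α ≠ ⊤ → e α = ε α) {s β : ℝ} (hβ : e β ≠ ⊤)
    (hmax : IsMaxOn (fun α => -α * s - ε α) {α | e α ≠ ⊤} β) :
    rate e s = ((-β * s - ε β : ℝ) : EReal) := by
  rw [rate_eq_biSup he]
  exact biSup_coe_eq_of_isGreatest ⟨mem_image_of_mem _ hβ, forall_mem_image.2 hmax⟩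

theorem sZero_eq_biSup (hε : ∀ α ∈ Ioc (0 : ℝ) 1, e α = ε α) :
    sZero e = ⨆ α ∈ Ioc (0 : ℝ) 1, ((-ε α / α : ℝ) : EReal) :=
  iSup_congr fun α => iSup_congr fun hα => by
    rw [hε α hα, div_eq_mul_inv, EReal.coe_mul, EReal.coe_neg]

theorem sOne_eq_biSup (hε : ∀ α ∈ Ico (0 : ℝ) 1, e α = ε α) :
    sOne e = ⨆ α ∈ Ico (0 : ℝ) 1, ((-ε α / (1 - α) : ℝ) : EReal) :=
  iSup_congr fun α => iSup_congr fun hα => by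
    rw [hε α hα, div_eq_mul_inv, EReal.coe_mul, EReal.coe_neg]

theorem hoeffding_eq_biSup (hε : ∀ α ∈ Ioc (0 : ℝ) 1, e α = ε α) (u : ℝ) :
    hoeffding e u = ⨆ α ∈ Ioc (0 : ℝ) 1, ((α⁻¹ * (-(1 - α) * u - ε α) : ℝ) : EReal) :=
  iSup_congr fun α => iSup_congr fun hα => by rw [hε α hα, ← EReal.coe_sub, ← EReal.coe_mul]

theorem hoeffding_zero (e : ℝ → EReal) : hoeffding e 0 = sZero e :=
  iSup_congr fun α => iSup_congr fun _ => by rw [mul_zero, EReal.coe_zero, zero_sub, mul_comm]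

theorem eq_coe_of_mem_Icc (he : ∀ α, e α ≠ ⊤ → e α = ε α) (hε : ConvexOn ℝ {α | e α ≠ ⊤} ε)
    (he0 : e 0 = 0) (he1 : e 1 = 0) : ∀ α ∈ Icc (0 : ℝ) 1, e α = ε α :=
  fun α hα => he α (Icc_subset_dom hε he0 he1 hα)

theorem eq_zero_of_eq_coe {α : ℝ} (he : e α = ε α) (h : e α = 0) : ε α = 0 :=
  EReal.coe_eq_zero.mp (he.symm.trans h)

theorem sZero_nonneg (he1 : e 1 = 0) : 0 ≤ sZero e :=
  le_iSup₂_of_le (f := fun α (_ : α ∈ Ioc (0 : ℝ) 1) => (-(e α)) * ((α⁻¹ : ℝ) : EReal)) 1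
    ⟨one_pos, le_rfl⟩ (by simp [he1])

theorem exists_lt_zero_of_lt_sZero (hε : ∀ α ∈ Ioc (0 : ℝ) 1, e α = ε α) {s : ℝ}
    (hs : (s : EReal) < sZero e) : ∃ α ∈ Ioc (0 : ℝ) 1, ε α + s * α < 0 := by
  rw [sZero_eq_biSup hε, lt_biSup_iff] at hs
  obtain ⟨α, hα, hlt⟩ := hs
  have := (lt_div_iff₀ hα.1).mp (EReal.coe_lt_coe_iff.mp hlt)
  exact ⟨α, hα, by linarith⟩

theorem exists_lt_of_neg_sOne_lt (hε : ∀ α ∈ Ico (0 : ℝ) 1, e α = ε α) {s : ℝ}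
    (hs : -sOne e < s) : ∃ α ∈ Ico (0 : ℝ) 1, ε α + s * α < s := by
  rw [EReal.neg_lt_comm, ← EReal.coe_neg, sOne_eq_biSup hε, lt_biSup_iff] at hs
  obtain ⟨α, hα, hlt⟩ := hs
  have := (lt_div_iff₀ (sub_pos.mpr hα.2)).mp (EReal.coe_lt_coe_iff.mp hlt)
  exact ⟨α, hα, by linarith⟩

theorem exists_rate_eq (he : ∀ α, e α ≠ ⊤ → e α = ε α) (hε : ConvexOn ℝ {α | e α ≠ ⊤} ε)
    (he0 : e 0 = 0) (he1 : e 1 = 0) (hlsc : LowerSemicontinuous e) {s : ℝ}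
    (hs : s ∈ slopeInterval e) :
    ∃ β ∈ Ioo (0 : ℝ) 1, ε β + s * β < 0 ∧ ε β + s * β < s ∧
      rate e s = ((-β * s - ε β : ℝ) : EReal) := by
  have hD := Icc_subset_dom hε he0 he1
  have hεIcc := eq_coe_of_mem_Icc he hε he0 he1
  have hε0 := eq_zero_of_eq_coe (hεIcc 0 ⟨le_rfl, zero_le_one⟩) he0
  have hε1 := eq_zero_of_eq_coe (hεIcc 1 ⟨zero_le_one, le_rfl⟩) he1
  obtain ⟨α₀, hα₀, h₀⟩ :=
    exists_lt_zero_of_lt_sZero (fun α hα => hεIcc α (Ioc_subset_Icc_self hα)) hs.2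
  obtain ⟨α₁, hα₁, h₁⟩ :=
    exists_lt_of_neg_sOne_lt (fun α hα => hεIcc α (Ico_subset_Icc_self hα)) hs.1
  have hψ : ConvexOn ℝ {α | e α ≠ ⊤} (fun α => ε α + s * α) :=
    hε.add ((LinearMap.mul ℝ ℝ s).convexOn hε.1)
  have hψlsc : LowerSemicontinuousOn (fun α => ε α + s * α) (Icc 0 1) :=
    (lowerSemicontinuousOn_of_eq_coe hlsc hεIcc).add
      (continuous_const.mul continuous_id).continuousOn.lowerSemicontinuousOn
  obtain ⟨β, hβ, hmin⟩ := hψ.exists_isMinOn_mem_Ioo hD hψlsc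
    ⟨α₀, Ioc_subset_Icc_self hα₀, by simpa [hε0] using h₀⟩
    ⟨α₁, Ico_subset_Icc_self hα₁, by simpa [hε1] using h₁⟩
  refine ⟨β, hβ, (hmin (hD (Ioc_subset_Icc_self hα₀))).trans_lt h₀,
    (hmin (hD (Ico_subset_Icc_self hα₁))).trans_lt h₁,
    rate_eq_of_isMaxOn he (hD (Ioo_subset_Icc_self hβ)) (isMaxOn_iff.mpr fun α hα => ?_)⟩
  have := isMinOn_iff.mp hmin α hα
  linarith

theorem rate_le_of_forall_mem_Icc (he : ∀ α, e α ≠ ⊤ → e α = ε α)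
    (hε : ConvexOn ℝ {α | e α ≠ ⊤} ε) (he0 : e 0 = 0) (he1 : e 1 = 0)
    (hlsc : LowerSemicontinuous e) {s c : ℝ} (hs : s ∈ slopeInterval e)
    (hc : ∀ α ∈ Icc (0 : ℝ) 1, -α * s - ε α ≤ c) : rate e s ≤ c := by
  obtain ⟨β, hβ, -, -, hrate⟩ := exists_rate_eq he hε he0 he1 hlsc hs
  rw [hrate]
  exact EReal.coe_le_coe_iff.mpr (hc β (Ioo_subset_Icc_self hβ))

theorem convex_slopeInterval : Convex ℝ (slopeInterval e) :=
  convex_iff_ordConnected.mpr ⟨fun _ hx _ hy _ hz =>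
    ⟨hx.1.trans_le (EReal.coe_le_coe_iff.mpr hz.1),
      (EReal.coe_le_coe_iff.mpr hz.2).trans_lt hy.2⟩⟩

theorem isOpen_slopeInterval : IsOpen (slopeInterval e) :=
  isOpen_Ioo.preimage continuous_coe_real_ereal

theorem neg_mem_slopeInterval (he1 : e 1 = 0) {y : ℝ} (hy : 0 < y) (hys : (y : EReal) < sOne e) :
    -y ∈ slopeInterval e :=
  ⟨by rwa [EReal.coe_neg, EReal.neg_lt_neg_iff],
    (EReal.coe_lt_coe_iff.mpr (neg_neg_of_pos hy)).trans_le (sZero_nonneg he1)⟩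

theorem rate_strictAntiOn (he : ∀ α, e α ≠ ⊤ → e α = ε α) (hε : ConvexOn ℝ {α | e α ≠ ⊤} ε)
    (he0 : e 0 = 0) (he1 : e 1 = 0) (hlsc : LowerSemicontinuous e) :
    StrictAntiOn (rate e) (slopeInterval e) := by
  intro s _ t ht hst
  obtain ⟨β, hβ, -, -, hrate⟩ := exists_rate_eq he hε he0 he1 hlsc ht
  rw [hrate]
  refine lt_of_lt_of_le ?_ (coe_sub_le_rate (eq_coe_of_mem_Icc he hε he0 he1 β
    (Ioo_subset_Icc_self hβ)) s)
  exact EReal.coe_lt_coe_iff.mpr (by nlinarith [hβ.1])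

theorem rate_continuousOn (he : ∀ α, e α ≠ ⊤ → e α = ε α) (hε : ConvexOn ℝ {α | e α ≠ ⊤} ε)
    (he0 : e 0 = 0) (he1 : e 1 = 0) (hlsc : LowerSemicontinuous e) :
    ContinuousOn (rate e) (slopeInterval e) := by
  have hreal : ∀ s ∈ slopeInterval e, rate e s = (rate e s).toReal := fun s hs => by
    obtain ⟨β, -, -, -, hrate⟩ := exists_rate_eq he hε he0 he1 hlsc hs
    rw [hrate, EReal.toReal_coe]
  have hconv : ConvexOn ℝ (slopeInterval e) fun s => (rate e s).toReal := by
    refine ⟨convex_slopeInterval, fun s hs t ht p q hp hq hpq => ?_⟩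
    obtain ⟨β, hβ, -, -, hrate⟩ :=
      exists_rate_eq he hε he0 he1 hlsc (convex_slopeInterval hs ht hp hq hpq)
    have hβe := eq_coe_of_mem_Icc he hε he0 he1 β (Ioo_subset_Icc_self hβ)
    have hbound : ∀ r ∈ slopeInterval e, -β * r - ε β ≤ (rate e r).toReal := fun r hr =>
      EReal.coe_le_coe_iff.mp ((coe_sub_le_rate hβe r).trans_eq (hreal r hr))
    simp only [smul_eq_mul] at hrate ⊢
    rw [hrate, EReal.toReal_coe]
    calc -β * (p * s + q * t) - ε β = p * (-β * s - ε β) + q * (-β * t - ε β) := by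
          linear_combination ε β * hpq
      _ ≤ p * (rate e s).toReal + q * (rate e t).toReal := by
          gcongr
          exacts [hbound s hs, hbound t ht]
  exact (continuous_coe_real_ereal.comp_continuousOn
    (hconv.continuousOn isOpen_slopeInterval)).congr hreal

theorem rate_mem_Ioo (he : ∀ α, e α ≠ ⊤ → e α = ε α) (hε : ConvexOn ℝ {α | e α ≠ ⊤} ε)
    (he0 : e 0 = 0) (he1 : e 1 = 0) (hlsc : LowerSemicontinuous e) {s : ℝ}
    (hs : s ∈ slopeInterval e) : rate e s ∈ Ioo 0 (sOne e) := by
  obtain ⟨β, hβ, hneg, hlt, hrate⟩ := exists_rate_eq he hε he0 he1 hlsc hs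
  have hβ1 : 0 < 1 - β := sub_pos.mpr hβ.2
  have hsOne : ((-ε β / (1 - β) : ℝ) : EReal) ≤ sOne e := by
    rw [sOne_eq_biSup fun α hα => eq_coe_of_mem_Icc he hε he0 he1 α (Ico_subset_Icc_self hα)]
    exact le_iSup₂_of_le (f := fun α (_ : α ∈ Ico (0 : ℝ) 1) => ((-ε α / (1 - α) : ℝ) : EReal))
      β ⟨hβ.1.le, hβ.2⟩ le_rfl
  rw [hrate]
  refine ⟨EReal.coe_pos.mpr (by linarith), lt_of_lt_of_le (EReal.coe_lt_coe_iff.mpr ?_) hsOne⟩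
  rw [lt_div_iff₀ hβ1]
  nlinarith [mul_pos hβ.1 (sub_pos.mpr hlt)]

theorem exists_rate_le_of_sZero_eq_coe (he : ∀ α, e α ≠ ⊤ → e α = ε α)
    (hε : ConvexOn ℝ {α | e α ≠ ⊤} ε) (he0 : e 0 = 0) (he1 : e 1 = 0)
    (hlsc : LowerSemicontinuous e) {y u : ℝ} (hy : 0 < y) (hys : (y : EReal) < sOne e)
    (hu : sZero e = u) : ∃ s ∈ slopeInterval e, rate e s ≤ y := by
  have hεIcc := eq_coe_of_mem_Icc he hε he0 he1
  have hε0 := eq_zero_of_eq_coe (hεIcc 0 ⟨le_rfl, zero_le_one⟩) he0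
  have hlub := isLUB_of_biSup_coe_eq
    ((sZero_eq_biSup fun α hα => hεIcc α (Ioc_subset_Icc_self hα)).symm.trans hu)
  have htangent : ∀ α ∈ Icc (0 : ℝ) 1, -ε α ≤ α * u := by
    rintro α ⟨hα0, hα1⟩
    rcases hα0.eq_or_lt with rfl | hαpos
    · simp [hε0]
    · rw [mul_comm, ← div_le_iff₀ hαpos]
      exact hlub.1 ⟨α, ⟨hαpos, hα1⟩, rfl⟩
  have hu0 : 0 ≤ u := EReal.coe_nonneg.mp (hu ▸ sZero_nonneg he1)
  have hs : max (-y) (u - y) ∈ slopeInterval e := by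
    refine ⟨(neg_mem_slopeInterval he1 hy hys).1.trans_le (EReal.coe_le_coe_iff.mpr
      (le_max_left _ _)), ?_⟩
    rw [hu, EReal.coe_lt_coe_iff]
    exact max_lt (by linarith) (by linarith)
  refine ⟨_, hs, rate_le_of_forall_mem_Icc he hε he0 he1 hlsc hs fun α hα => ?_⟩
  have hgap : 0 ≤ u - max (-y) (u - y) := by simp [hu0, hy.le]
  have := mul_le_of_le_one_left hgap hα.2
  nlinarith [htangent α hα, le_max_right (-y) (u - y)]

theorem exists_rate_le_of_sZero_eq_top (he : ∀ α, e α ≠ ⊤ → e α = ε α)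
    (hε : ConvexOn ℝ {α | e α ≠ ⊤} ε) (he0 : e 0 = 0) (he1 : e 1 = 0)
    (hlsc : LowerSemicontinuous e) {y : ℝ} (hy : 0 < y) (hys : (y : EReal) < sOne e)
    (htop : sZero e = ⊤) : ∃ s ∈ slopeInterval e, rate e s ≤ y := by
  have hεIcc := eq_coe_of_mem_Icc he hε he0 he1
  obtain ⟨γ, -, hmin⟩ := (lowerSemicontinuousOn_of_eq_coe hlsc hεIcc).exists_isMinOn
    (nonempty_Icc.mpr zero_le_one) isCompact_Icc
  obtain ⟨δ, hδ, hnear⟩ := Metric.eventually_nhds_iff.mp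
    (hlsc 0 ((-y : ℝ) : EReal) (show ((-y : ℝ) : EReal) < e 0 by
      rw [he0]; exact_mod_cast neg_neg_of_pos hy))
  -- Near `0`, `-ε < y` by lower semicontinuity; away from `0`, a large slope `s` beats `min ε`.
  set s := max 0 (-ε γ / δ)
  have hs : s ∈ slopeInterval e := by
    have hneg : -sOne e < ((0 : ℝ) : EReal) := (neg_mem_slopeInterval he1 hy hys).1.trans
      (EReal.coe_lt_coe_iff.mpr (neg_neg_of_pos hy))
    exact ⟨hneg.trans_le (EReal.coe_le_coe_iff.mpr (le_max_left _ _)), htop ▸ EReal.coe_lt_top s⟩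
  refine ⟨s, hs, rate_le_of_forall_mem_Icc he hε he0 he1 hlsc hs fun α hα => ?_⟩
  have hαs : 0 ≤ α * s := mul_nonneg hα.1 (le_max_left _ _)
  rcases lt_or_ge α δ with hαδ | hδα
  · have : ((-y : ℝ) : EReal) < e α := hnear (by rwa [Real.dist_eq, sub_zero, abs_of_nonneg hα.1])
    rw [hεIcc α hα, EReal.coe_lt_coe_iff] at this
    linarith
  · have hδs : -ε γ ≤ δ * s := by
      rw [mul_comm, ← div_le_iff₀ hδ]
      exact le_max_right _ _
    have := mul_le_mul_of_nonneg_right hδα (le_max_left 0 (-ε γ / δ))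
    linarith [isMinOn_iff.mp hmin α hα]

theorem exists_rate_le (he : ∀ α, e α ≠ ⊤ → e α = ε α) (hε : ConvexOn ℝ {α | e α ≠ ⊤} ε)
    (he0 : e 0 = 0) (he1 : e 1 = 0) (hlsc : LowerSemicontinuous e) {y : ℝ} (hy : 0 < y)
    (hys : (y : EReal) < sOne e) : ∃ s ∈ slopeInterval e, rate e s ≤ y := by
  by_cases htop : sZero e = ⊤
  · exact exists_rate_le_of_sZero_eq_top he hε he0 he1 hlsc hy hys htop
  · exact exists_rate_le_of_sZero_eq_coe he hε he0 he1 hlsc hy hys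
      (EReal.coe_toReal htop (EReal.bot_lt_zero.trans_le (sZero_nonneg he1)).ne').symm

theorem rate_image (he : ∀ α, e α ≠ ⊤ → e α = ε α) (hε : ConvexOn ℝ {α | e α ≠ ⊤} ε)
    (he0 : e 0 = 0) (he1 : e 1 = 0) (hlsc : LowerSemicontinuous e) :
    rate e '' slopeInterval e = Ioo 0 (sOne e) := by
  refine Subset.antisymm ?_ ?_
  · rintro _ ⟨s, hs, rfl⟩
    exact rate_mem_Ioo he hε he0 he1 hlsc hs
  rintro y ⟨hy0, hys⟩
  obtain ⟨y, rfl⟩ : ∃ r : ℝ, y = r := ⟨y.toReal, (EReal.coe_toReal hys.ne_top hy0.ne_bot).symm⟩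
  have hy := EReal.coe_pos.mp hy0
  obtain ⟨s, hs, hle⟩ := exists_rate_le he hε he0 he1 hlsc hy hys
  have hge : (y : EReal) ≤ rate e (-y) := by
    simpa using coe_sub_le_rate (he1.trans EReal.coe_zero.symm) (-y)
  have hconn := (convex_slopeInterval.isPreconnected.image _
    (rate_continuousOn he hε he0 he1 hlsc)).ordConnected
  exact hconn.out (mem_image_of_mem _ hs) (mem_image_of_mem _ (neg_mem_slopeInterval he1 hy hys))
    ⟨hle, hge⟩

theorem hoeffding_eq_coe (hε : ∀ α ∈ Ioc (0 : ℝ) 1, e α = ε α) {s u β : ℝ}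
    (hle : ∀ α ∈ Ioc (0 : ℝ) 1, -α * s - ε α ≤ u) (hβ : β ∈ Ioc (0 : ℝ) 1)
    (hβu : -β * s - ε β = u) : hoeffding e u = ((s + u : ℝ) : EReal) := by
  rw [hoeffding_eq_biSup hε]
  refine biSup_coe_eq_of_isGreatest ⟨⟨β, hβ, ?_⟩, ?_⟩
  · rw [← hβu]
    field_simp [hβ.1.ne']
    ring
  · rintro _ ⟨α, hα, rfl⟩
    rw [inv_mul_le_iff₀ hα.1]
    linarith [hle α hα]

theorem hoeffding_eq_of_rate_eq (he : ∀ α, e α ≠ ⊤ → e α = ε α) (hε : ConvexOn ℝ {α | e α ≠ ⊤} ε)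
    (he0 : e 0 = 0) (he1 : e 1 = 0) (hlsc : LowerSemicontinuous e) {s u : ℝ}
    (hs : s ∈ slopeInterval e) (hu : rate e s = u) : hoeffding e u = ((s + u : ℝ) : EReal) := by
  have hεIoc : ∀ α ∈ Ioc (0 : ℝ) 1, e α = ε α := fun α hα =>
    eq_coe_of_mem_Icc he hε he0 he1 α (Ioc_subset_Icc_self hα)
  obtain ⟨β, hβ, -, -, hrate⟩ := exists_rate_eq he hε he0 he1 hlsc hs
  refine hoeffding_eq_coe hεIoc (fun α hα => ?_) ⟨hβ.1, hβ.2.le⟩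
    (EReal.coe_eq_coe_iff.mp (hrate.symm.trans hu))
  exact EReal.coe_le_coe_iff.mp ((coe_sub_le_rate (hεIoc α hα) s).trans_eq hu)

theorem isMaxOn_of_sZero_eq (he : ∀ α, e α ≠ ⊤ → e α = ε α) (hε : ConvexOn ℝ {α | e α ≠ ⊤} ε)
    (he0 : e 0 = 0) (he1 : e 1 = 0) {u : ℝ} (hu : sZero e = u) :
    IsMaxOn (fun α => -α * u - ε α) {α | e α ≠ ⊤} 0 := by
  have hεIcc := eq_coe_of_mem_Icc he hε he0 he1
  exact hε.isMaxOn_zero_of_isLUB (Icc_subset_dom hε he0 he1)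
    (eq_zero_of_eq_coe (hεIcc 0 ⟨le_rfl, zero_le_one⟩) he0)
    (eq_zero_of_eq_coe (hεIcc 1 ⟨zero_le_one, le_rfl⟩) he1)
    (isLUB_of_biSup_coe_eq
      ((sZero_eq_biSup fun α hα => hεIcc α (Ioc_subset_Icc_self hα)).symm.trans hu))

theorem isMaxOn_of_sOne_eq (he : ∀ α, e α ≠ ⊤ → e α = ε α) (hε : ConvexOn ℝ {α | e α ≠ ⊤} ε)
    (he0 : e 0 = 0) (he1 : e 1 = 0) {u : ℝ} (hu : sOne e = u) :
    IsMaxOn (fun α => -α * -u - ε α) {α | e α ≠ ⊤} 1 := by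
  have hεIcc := eq_coe_of_mem_Icc he hε he0 he1
  exact hε.isMaxOn_one_of_isLUB (Icc_subset_dom hε he0 he1)
    (eq_zero_of_eq_coe (hεIcc 0 ⟨le_rfl, zero_le_one⟩) he0)
    (eq_zero_of_eq_coe (hεIcc 1 ⟨zero_le_one, le_rfl⟩) he1)
    (isLUB_of_biSup_coe_eq
      ((sOne_eq_biSup fun α hα => hεIcc α (Ico_subset_Icc_self hα)).symm.trans hu))

theorem rate_eq_zero_of_sZero_eq (he : ∀ α, e α ≠ ⊤ → e α = ε α) (hε : ConvexOn ℝ {α | e α ≠ ⊤} ε)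
    (he0 : e 0 = 0) (he1 : e 1 = 0) {u : ℝ} (hu : sZero e = u) : rate e u = 0 := by
  have := rate_eq_of_isMaxOn he (by simp [he0]) (isMaxOn_of_sZero_eq he hε he0 he1 hu)
  rwa [neg_zero, zero_mul, zero_sub, eq_zero_of_eq_coe (he 0 (by simp [he0])) he0, neg_zero,
    EReal.coe_zero] at this

theorem rate_neg_eq_of_sOne_eq (he : ∀ α, e α ≠ ⊤ → e α = ε α) (hε : ConvexOn ℝ {α | e α ≠ ⊤} ε)
    (he0 : e 0 = 0) (he1 : e 1 = 0) {u : ℝ} (hu : sOne e = u) : rate e (-u) = u := by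
  have := rate_eq_of_isMaxOn he (by simp [he1]) (isMaxOn_of_sOne_eq he hε he0 he1 hu)
  rwa [eq_zero_of_eq_coe (he 1 (by simp [he1])) he1, sub_zero, neg_mul, one_mul, neg_neg] at this

theorem hoeffding_eq_zero_of_sOne_eq (he : ∀ α, e α ≠ ⊤ → e α = ε α)
    (hε : ConvexOn ℝ {α | e α ≠ ⊤} ε) (he0 : e 0 = 0) (he1 : e 1 = 0) {u : ℝ} (hu : sOne e = u) :
    hoeffding e u = 0 := by
  have hεIcc := eq_coe_of_mem_Icc he hε he0 he1
  have hmax := isMaxOn_of_sOne_eq he hε he0 he1 hu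
  have hε1 := eq_zero_of_eq_coe (hεIcc 1 ⟨zero_le_one, le_rfl⟩) he1
  have := hoeffding_eq_coe (s := -u) (u := u) (fun α hα => hεIcc α (Ioc_subset_Icc_self hα))
    (fun α hα => (hmax (Icc_subset_dom hε he0 he1 (Ioc_subset_Icc_self hα))).trans_eq
      (by simp [hε1])) ⟨zero_lt_one, le_rfl⟩ (by simp [hε1])
  rwa [neg_add_cancel, EReal.coe_zero] at this

end EntropicPressure

open EntropicPressure in
/-- **The Hoeffding function inverts the rate function.**
Let `e : ℝ → (−∞,+∞]` be convex, lower semicontinuous with `e(0) = e(1) = 0`, and set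
`İ(s) = sup_α (−αs − e(α))`, `f(u) = sup_{α∈(0,1]} α⁻¹(−(1−α)u − e(α))`,
`g(u) = f(u) − u`, `s̲₀ = sup_{α∈(0,1]} (−e(α)/α)`, `s̲₁ = sup_{α∈[0,1)} (−e(α)/(1−α))`.
Then `İ` is strictly decreasing and continuous on `(−s̲₁, s̲₀)` and maps it bijectively
onto `(0, s̲₁)`, with inverse the restriction of `g`; in particular
`f(İ(s)) = İ(s) + s` on `(−s̲₁, s̲₀)`.  Moreover if `s̲₀ < +∞` then `g(0) = s̲₀` and
`İ(s̲₀) = 0`, and if `s̲₁ < +∞` then `g(s̲₁) = −s̲₁` and `İ(−s̲₁) = s̲₁`. -/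
theorem hoeffding_function_inverts_rate
    (e : ℝ → EReal)
    (hproper : ∀ α : ℝ, e α ≠ ⊥)
    (hconv : ∀ x y p q : ℝ, 0 ≤ p → 0 ≤ q → p + q = 1 →
      e (p * x + q * y) ≤ (p : EReal) * e x + (q : EReal) * e y)
    (hlsc : LowerSemicontinuous e)
    (he0 : e 0 = 0) (he1 : e 1 = 0)
    (Ifun : ℝ → EReal)
    (hIfun : ∀ s : ℝ, Ifun s = ⨆ α : ℝ, ((-α * s : ℝ) : EReal) - e α)
    (f : ℝ → EReal)
    (hf : ∀ u : ℝ, f u = ⨆ α ∈ Set.Ioc (0 : ℝ) 1,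
        ((α⁻¹ : ℝ) : EReal) * (((-(1 - α) * u : ℝ) : EReal) - e α))
    (g : ℝ → EReal) (hg : ∀ u : ℝ, g u = f u - (u : EReal))
    (s0 s1 : EReal)
    (hs0 : s0 = ⨆ α ∈ Set.Ioc (0 : ℝ) 1, (-(e α)) * ((α⁻¹ : ℝ) : EReal))
    (hs1 : s1 = ⨆ α ∈ Set.Ico (0 : ℝ) 1, (-(e α)) * (((1 - α)⁻¹ : ℝ) : EReal))
    (A : Set ℝ) (hA : A = {s : ℝ | -s1 < (s : EReal) ∧ (s : EReal) < s0}) :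
    StrictAntiOn Ifun A
    ∧ ContinuousOn Ifun A
    ∧ Ifun '' A = {y : EReal | 0 < y ∧ y < s1}
    ∧ (∀ s ∈ A, ∀ u : ℝ, Ifun s = (u : EReal) →
        g u = (s : EReal) ∧ f u = Ifun s + (s : EReal))
    ∧ (∀ u0 : ℝ, s0 = (u0 : EReal) → g 0 = s0 ∧ Ifun u0 = 0)
    ∧ (∀ u1 : ℝ, s1 = (u1 : EReal) → g u1 = -s1 ∧ Ifun (-u1) = s1) := by
  obtain rfl : Ifun = rate e := funext hIfun
  obtain rfl : f = hoeffding e := funext hf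
  obtain rfl : s0 = sZero e := hs0
  obtain rfl : s1 = sOne e := hs1
  obtain rfl : A = slopeInterval e := hA
  have he : ∀ α, e α ≠ ⊤ → e α = (e α).toReal := fun α h => (EReal.coe_toReal h (hproper α)).symm
  have hε := convexOn_of_eq_coe he hconv
  refine ⟨rate_strictAntiOn he hε he0 he1 hlsc, rate_continuousOn he hε he0 he1 hlsc,
    rate_image he hε he0 he1 hlsc, fun s hs u hu => ?_, fun u0 hu0 => ?_, fun u1 hu1 => ?_⟩
  · rw [hg, hoeffding_eq_of_rate_eq he hε he0 he1 hlsc hs hu, hu, ← EReal.coe_sub,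
      add_sub_cancel_right, add_comm, EReal.coe_add]
    exact ⟨rfl, rfl⟩
  · rw [hg, hoeffding_zero, EReal.coe_zero, sub_zero]
    exact ⟨rfl, rate_eq_zero_of_sZero_eq he hε he0 he1 hu0⟩
  · rw [hg, hoeffding_eq_zero_of_sOne_eq he hε he0 he1 hu1, hu1, zero_sub]
    exact ⟨rfl, rate_neg_eq_of_sOne_eq he hε he0 he1 hu1⟩
end

section
/- Let (M,d) be a compact metric space, φ : M → M continuous, v : M → ℝ continuous, c ∈ ℝ, and let P be a Borel probability measure on M with full support (P(U) > 0 for every nonempty open U). For integers t ≥ 1 and ε > 0 write B_t(x,ε) := { y ∈ M : d(φ^s(x), φ^s(y)) < ε for all 0 ≤ s < t } for the Bowen ball, S_t v := Σ_{s=0}^{t−1} v∘φ^s, and γ_ε(v) := max{ |v(x) − v(y)| : x,y ∈ M, d(x,y) ≤ ε }. Suppose that for every t ≥ 1 and ε > 0 there is a constant K_t(ε) ≥ 1 with lim_{ε↓0} limsup_{t→∞} t^{−1} log K_t(ε) = 0, such that K_t(ε)^{−1} e^{S_t v(x) − tc} ≤ P(B_t(x,ε)) ≤ K_t(ε) e^{S_t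 v(x) − tc} holds for P-almost every x ∈ M. Then for every x ∈ M, every t ≥ 1 and every ε > 0, K′_t(ε)^{−1} e^{S_t v(x) − tc − tγ_ε(v)} ≤ P(B_t(x,ε)) ≤ K′_t(ε) e^{S_t v(x) − tc + tγ_ε(v)}, where K′_t(ε) := max(K_t(2ε), K_t(ε/2)); since lim_{ε↓0} γ_ε(v) = 0 by uniform continuity, the constants K′_t(ε)e^{tγ_ε(v)} again satisfy lim_{ε↓0} limsup_{t→∞} t^{−1} log(K′_t(ε)e^{tγ_ε(v)}) = 0, so P is a weak Gibbs measure for v. -/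
open MeasureTheory Filter
open scoped ENNReal Topology

/-- The Bowen ball `B_t(x, ε) = { y : d(φ^s x, φ^s y) < ε for all 0 ≤ s < t }`. -/
def bowenBall {M : Type*} [PseudoMetricSpace M] (φ : M → M) (t : ℕ) (ε : ℝ) (x : M) :
    Set M :=
  {y | ∀ s < t, dist (φ^[s] x) (φ^[s] y) < ε}

/-- The Birkhoff sum `S_t v = Σ_{s=0}^{t−1} v ∘ φ^s`. -/
def birkhoffSumOf {M : Type*} (φ : M → M) (v : M → ℝ) (t : ℕ) (x : M) : ℝ :=
  ∑ s ∈ Finset.range t, v (φ^[s] x)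

/-- The modulus of continuity `γ_ε(v) = max { |v(x) − v(y)| : d(x,y) ≤ ε }`. -/
noncomputable def oscModulus {M : Type*} [PseudoMetricSpace M] (v : M → ℝ) (ε : ℝ) : ℝ :=
  sSup {d : ℝ | ∃ x y : M, dist x y ≤ ε ∧ d = |v x - v y|}

/-!
Full support makes the points where the almost-everywhere Gibbs bounds hold dense, so every
Bowen ball `B_t(x, ε)` contains such a point `y`. By the triangle inequality
`B_t(y, ε/2) ⊆ B_t(x, ε) ⊆ B_t(y, 2ε)`, and along orbit segments that stay `ε`-close the
Birkhoff sums differ by at most `t γ_ε(v)`. For the constants, the exponential growth rate of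
`max(K_t(2ε), K_t(ε/2)) e^{t γ_ε(v)}` is the larger of the two old rates plus `γ_ε(v)`, and
`γ_ε(v) → 0` by uniform continuity of `v` on the compact space.
-/

section BowenBall

variable {M : Type*} [PseudoMetricSpace M] {φ : M → M} {t : ℕ} {ε δ δ' : ℝ} {x y : M}

lemma isOpen_bowenBall (hφ : Continuous φ) : IsOpen (bowenBall φ t ε x) := by
  have h : bowenBall φ t ε x = ⋂ s ∈ Finset.range t, φ^[s] ⁻¹' Metric.ball (φ^[s] x) ε := by
    ext y; simp [bowenBall, Metric.mem_ball, dist_comm]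
  rw [h]
  exact isOpen_biInter_finset fun s _ => Metric.isOpen_ball.preimage (hφ.iterate s)

lemma mem_bowenBall_self (hε : 0 < ε) : x ∈ bowenBall φ t ε x :=
  fun s _ => by simpa using hε

lemma mem_bowenBall_comm : y ∈ bowenBall φ t ε x ↔ x ∈ bowenBall φ t ε y := by
  simp only [bowenBall, Set.mem_ofPred_eq, dist_comm]

lemma bowenBall_mono (h : δ ≤ ε) : bowenBall φ t δ x ⊆ bowenBall φ t ε x :=
  fun _ hy s hs => (hy s hs).trans_le h

lemma bowenBall_subset_of_mem (h : y ∈ bowenBall φ t δ x) :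
    bowenBall φ t δ' y ⊆ bowenBall φ t (δ + δ') x :=
  fun _ hz s hs => (dist_triangle _ _ _).trans_lt (add_lt_add (h s hs) (hz s hs))

end BowenBall

section Oscillation

variable {M : Type*} [PseudoMetricSpace M] {v : M → ℝ} {ε : ℝ}

lemma oscModulus_nonneg : 0 ≤ oscModulus v ε :=
  Real.sSup_nonneg (by rintro d ⟨x, y, -, rfl⟩; positivity)

variable [CompactSpace M]

lemma abs_sub_le_oscModulus (hv : Continuous v) {x y : M} (h : dist x y ≤ ε) :
    |v x - v y| ≤ oscModulus v ε := by
  obtain ⟨C, hC⟩ := isCompact_univ.exists_bound_of_continuousOn hv.continuousOn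
  refine le_csSup ⟨2 * C, ?_⟩ ⟨x, y, h, rfl⟩
  rintro d ⟨x', y', -, rfl⟩
  have hx := hC x' (Set.mem_univ _)
  have hy := hC y' (Set.mem_univ _)
  rw [Real.norm_eq_abs] at hx hy
  linarith [abs_sub (v x') (v y')]

lemma tendsto_oscModulus (hv : Continuous v) :
    Tendsto (oscModulus v) (𝓝[>] 0) (𝓝 0) := by
  rw [Metric.tendsto_nhdsWithin_nhds]
  intro η hη
  obtain ⟨δ, hδ, hvδ⟩ := Metric.uniformContinuous_iff.1
    (CompactSpace.uniformContinuous_of_continuous hv) (η / 2) (half_pos hη)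
  refine ⟨δ, hδ, fun {ε} (hε : 0 < ε) hεδ => ?_⟩
  rw [Real.dist_eq, sub_zero, abs_of_pos hε] at hεδ
  have hle : oscModulus v ε ≤ η / 2 := by
    refine Real.sSup_le ?_ (half_pos hη).le
    rintro d ⟨x, y, hxy, rfl⟩
    exact (hvδ (hxy.trans_lt hεδ)).le
  rw [Real.dist_eq, sub_zero, abs_of_nonneg oscModulus_nonneg]
  linarith

lemma abs_birkhoffSumOf_sub_le (hv : Continuous v) {φ : M → M} {t : ℕ} {x y : M}
    (h : y ∈ bowenBall φ t ε x) :
    |birkhoffSumOf φ v t x - birkhoffSumOf φ v t y| ≤ t * oscModulus v ε := by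
  rw [birkhoffSumOf, birkhoffSumOf, ← Finset.sum_sub_distrib]
  calc |∑ s ∈ Finset.range t, (v (φ^[s] x) - v (φ^[s] y))|
      ≤ ∑ s ∈ Finset.range t, |v (φ^[s] x) - v (φ^[s] y)| := Finset.abs_sum_le_sum_abs _ _
    _ ≤ ∑ _s ∈ Finset.range t, oscModulus v ε := Finset.sum_le_sum fun s hs =>
        abs_sub_le_oscModulus hv (h s (Finset.mem_range.1 hs)).le
    _ = t * oscModulus v ε := by simp

end Oscillation

section GibbsBounds

variable {M : Type*} [PseudoMetricSpace M] [CompactSpace M] [MeasurableSpace M]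
  {μ : Measure M} [μ.IsOpenPosMeasure] {φ : M → M} {v : M → ℝ} {c k k' ε : ℝ} {t : ℕ}

lemma ofReal_le_measure_bowenBall_of_ae (hφ : Continuous φ) (hv : Continuous v) (hε : 0 < ε)
    (hk : 0 < k) (hkk' : k ≤ k')
    (hlow : ∀ᵐ y ∂μ, ENNReal.ofReal (k⁻¹ * Real.exp (birkhoffSumOf φ v t y - t * c))
      ≤ μ (bowenBall φ t (ε / 2) y)) (x : M) :
    ENNReal.ofReal (k'⁻¹ * Real.exp (birkhoffSumOf φ v t x - t * c - t * oscModulus v ε))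
      ≤ μ (bowenBall φ t ε x) := by
  obtain ⟨y, hy, hxy⟩ := (Measure.dense_of_ae hlow).exists_mem_open (isOpen_bowenBall hφ)
    ⟨x, mem_bowenBall_self (half_pos hε)⟩
  have hS := abs_le.1 (abs_birkhoffSumOf_sub_le hv (bowenBall_mono (half_le_self hε.le) hxy))
  calc ENNReal.ofReal (k'⁻¹ * Real.exp (birkhoffSumOf φ v t x - t * c - t * oscModulus v ε))
      ≤ ENNReal.ofReal (k⁻¹ * Real.exp (birkhoffSumOf φ v t y - t * c)) :=
        ENNReal.ofReal_le_ofReal <| mul_le_mul (inv_anti₀ hk hkk')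
          (Real.exp_le_exp.2 (by linarith)) (Real.exp_nonneg _) (inv_nonneg.2 hk.le)
    _ ≤ μ (bowenBall φ t (ε / 2) y) := hy
    _ ≤ μ (bowenBall φ t ε x) := by
        simpa only [add_halves] using measure_mono (bowenBall_subset_of_mem (δ' := ε / 2) hxy)

lemma measure_bowenBall_le_ofReal_of_ae (hφ : Continuous φ) (hv : Continuous v) (hε : 0 < ε)
    (hk : 0 ≤ k) (hkk' : k ≤ k')
    (hup : ∀ᵐ y ∂μ, μ (bowenBall φ t (2 * ε) y)
      ≤ ENNReal.ofReal (k * Real.exp (birkhoffSumOf φ v t y - t * c))) (x : M) :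
    μ (bowenBall φ t ε x)
      ≤ ENNReal.ofReal (k' * Real.exp (birkhoffSumOf φ v t x - t * c + t * oscModulus v ε)) := by
  obtain ⟨y, hy, hxy⟩ := (Measure.dense_of_ae hup).exists_mem_open (isOpen_bowenBall hφ)
    ⟨x, mem_bowenBall_self hε⟩
  have hS := abs_le.1 (abs_birkhoffSumOf_sub_le hv hxy)
  calc μ (bowenBall φ t ε x) ≤ μ (bowenBall φ t (2 * ε) y) :=
        measure_mono (two_mul ε ▸ bowenBall_subset_of_mem (mem_bowenBall_comm.1 hxy))
    _ ≤ ENNReal.ofReal (k * Real.exp (birkhoffSumOf φ v t y - t * c)) := hy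
    _ ≤ ENNReal.ofReal (k' * Real.exp (birkhoffSumOf φ v t x - t * c + t * oscModulus v ε)) :=
        ENNReal.ofReal_le_ofReal <| mul_le_mul hkk'
          (Real.exp_le_exp.2 (by linarith)) (Real.exp_nonneg _) (hk.trans hkk')

end GibbsBounds

lemma Continuous.tendsto_nhdsGT_zero_of_pos {f : ℝ → ℝ} (hf : Continuous f) (h0 : f 0 = 0)
    (hpos : ∀ ε > 0, 0 < f ε) : Tendsto f (𝓝[>] 0) (𝓝[>] 0) :=
  tendsto_nhdsWithin_of_tendsto_nhds_of_eventually_within _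
    ((h0 ▸ hf.tendsto 0).mono_left nhdsWithin_le_nhds)
    (eventually_mem_nhdsWithin.mono hpos)

lemma EReal.limsup_add_coe {ι : Type*} {f : Filter ι} [f.NeBot] (u : ι → EReal) (g : ℝ) :
    limsup (fun i => u i + g) f = limsup u f + g := by
  refine le_antisymm ?_ ?_
  · have h := EReal.limsup_add_le (f := f) (u := u) (v := fun _ => (g : EReal))
      (.inr (by simp)) (.inr (by simp))
    rwa [limsup_const] at h
  · have h := EReal.le_limsup_add (f := f) (u := u) (v := fun _ => (g : EReal))
    rwa [liminf_const] at h

noncomputable def logGrowth (k : ℕ → ℝ) : EReal :=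
  limsup (fun t : ℕ => (((t : ℝ)⁻¹ * Real.log (k t) : ℝ) : EReal)) atTop

lemma logGrowth_max_mul_exp {k₁ k₂ : ℕ → ℝ} (h₁ : ∀ᶠ t in atTop, 0 < k₁ t)
    (h₂ : ∀ᶠ t in atTop, 0 < k₂ t) (g : ℝ) :
    logGrowth (fun t => max (k₁ t) (k₂ t) * Real.exp (t * g))
      = max (logGrowth k₁) (logGrowth k₂) + g := by
  have hterm : ∀ᶠ t : ℕ in atTop,
      (((t : ℝ)⁻¹ * Real.log (max (k₁ t) (k₂ t) * Real.exp (t * g)) : ℝ) : EReal)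
        = max (((t : ℝ)⁻¹ * Real.log (k₁ t) : ℝ) : EReal) (((t : ℝ)⁻¹ * Real.log (k₂ t) : ℝ))
          + g := by
    filter_upwards [h₁, h₂, eventually_gt_atTop 0] with t hk₁ hk₂ ht
    have ht' : (0 : ℝ) < t := Nat.cast_pos.2 ht
    rw [Real.log_mul (lt_max_of_lt_left hk₁).ne' (Real.exp_ne_zero _), Real.log_exp,
      Real.strictMonoOn_log.monotoneOn.map_max hk₁ hk₂, mul_add, inv_mul_cancel_left₀ ht'.ne',
      mul_max_of_nonneg _ _ (inv_nonneg.2 ht'.le), EReal.coe_add,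
      EReal.coe_strictMono.monotone.map_max]
  rw [logGrowth, limsup_congr hterm, EReal.limsup_add_coe, limsup_max]
  rfl

lemma tendsto_logGrowth_max_mul_exp {K : ℕ → ℝ → ℝ} {γ : ℝ → ℝ}
    (hK : ∀ ε > 0, ∀ᶠ t in atTop, 0 < K t ε)
    (hKlim : Tendsto (fun ε => logGrowth (K · ε)) (𝓝[>] 0) (𝓝 0))
    (hγ : Tendsto γ (𝓝[>] 0) (𝓝 0)) :
    Tendsto (fun ε => logGrowth (fun t => max (K t (2 * ε)) (K t (ε / 2)) * Real.exp (t * γ ε)))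
      (𝓝[>] 0) (𝓝 0) := by
  have hmax : Tendsto (fun ε => max (logGrowth (K · (2 * ε))) (logGrowth (K · (ε / 2))))
      (𝓝[>] 0) (𝓝 0) := by
    simpa using (hKlim.comp ((continuous_const_mul 2).tendsto_nhdsGT_zero_of_pos (mul_zero 2)
      fun ε hε => by positivity)).max
      (hKlim.comp ((continuous_id.div_const 2).tendsto_nhdsGT_zero_of_pos (zero_div 2)
        fun ε hε => by positivity))
  have hsum := (EReal.continuousAt_add (p := (0, 0)) (by simp) (by simp)).tendsto.comp
    (hmax.prodMk_nhds ((continuous_coe_real_ereal.tendsto 0).comp hγ))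
  rw [zero_add] at hsum
  refine hsum.congr' ?_
  filter_upwards [self_mem_nhdsWithin] with ε (hε : 0 < ε)
  exact (logGrowth_max_mul_exp (hK _ (by positivity)) (hK _ (by positivity)) _).symm

theorem weak_gibbs_ae_to_everywhere_general
    {M : Type*} [MetricSpace M] [CompactSpace M]
    [MeasurableSpace M]
    (φ : M → M) (hφ : Continuous φ)
    (v : M → ℝ) (hv : Continuous v) (c : ℝ)
    (P : Measure M)
    (hsupp : ∀ U : Set M, IsOpen U → U.Nonempty → 0 < P U)
    (K : ℕ → ℝ → ℝ)
    (hK1 : ∀ t : ℕ, 1 ≤ t → ∀ ε : ℝ, 0 < ε → 1 ≤ K t ε)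
    (hKlim : Tendsto (fun ε : ℝ =>
        limsup (fun t : ℕ => (((t : ℝ)⁻¹ * Real.log (K t ε) : ℝ) : EReal)) atTop)
      (𝓝[>] (0 : ℝ)) (nhds (0 : EReal)))
    (hGibbs : ∀ t : ℕ, 1 ≤ t → ∀ ε : ℝ, 0 < ε → ∀ᵐ x ∂P,
      ENNReal.ofReal ((K t ε)⁻¹ * Real.exp (birkhoffSumOf φ v t x - t * c))
          ≤ P (bowenBall φ t ε x)
        ∧ P (bowenBall φ t ε x)
          ≤ ENNReal.ofReal (K t ε * Real.exp (birkhoffSumOf φ v t x - t * c))) :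
    (∀ x : M, ∀ t : ℕ, 1 ≤ t → ∀ ε : ℝ, 0 < ε →
      ENNReal.ofReal ((max (K t (2 * ε)) (K t (ε / 2)))⁻¹ *
            Real.exp (birkhoffSumOf φ v t x - t * c - t * oscModulus v ε))
          ≤ P (bowenBall φ t ε x)
        ∧ P (bowenBall φ t ε x)
          ≤ ENNReal.ofReal (max (K t (2 * ε)) (K t (ε / 2)) *
              Real.exp (birkhoffSumOf φ v t x - t * c + t * oscModulus v ε)))
    ∧ Tendsto (fun ε : ℝ =>
        limsup (fun t : ℕ => (((t : ℝ)⁻¹ *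
            Real.log (max (K t (2 * ε)) (K t (ε / 2)) * Real.exp (t * oscModulus v ε))
          : ℝ) : EReal)) atTop)
      (𝓝[>] (0 : ℝ)) (nhds (0 : EReal)) := by
  have : P.IsOpenPosMeasure := ⟨fun U hU hne => (hsupp U hU hne).ne'⟩
  have hKpos (t : ℕ) (ht : 1 ≤ t) (ε : ℝ) (hε : 0 < ε) : 0 < K t ε :=
    zero_lt_one.trans_le (hK1 t ht ε hε)
  refine ⟨fun x t ht ε hε => ⟨?_, ?_⟩, ?_⟩
  · exact ofReal_le_measure_bowenBall_of_ae hφ hv hε (hKpos t ht _ (half_pos hε))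
      (le_max_right _ _) ((hGibbs t ht _ (half_pos hε)).mono fun _ h => h.1) x
  · exact measure_bowenBall_le_ofReal_of_ae hφ hv hε (hKpos t ht _ (by positivity)).le
      (le_max_left _ _) ((hGibbs t ht _ (by positivity)).mono fun _ h => h.2) x
  · exact tendsto_logGrowth_max_mul_exp
      (fun ε hε => (eventually_ge_atTop 1).mono fun t ht => hKpos t ht ε hε) hKlim
      (tendsto_oscModulus hv)

/-- **Almost-everywhere weak Gibbs bounds upgrade to everywhere.**
Let `φ` be a continuous self-map of a compact metric space `M`, `v` continuous, `c ∈ ℝ`,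
and `P` a fully supported Borel probability measure satisfying, for each `t ≥ 1` and
`ε > 0`, the two-sided Gibbs bounds with constants `K_t(ε) ≥ 1`
(`lim_{ε↓0} limsup_t t⁻¹ log K_t(ε) = 0`) at `P`-almost every point.  Then the analogous
bounds hold at *every* point with constants `K′_t(ε) = max(K_t(2ε), K_t(ε/2))` and an
extra factor `e^{±tγ_ε(v)}`, and these new constants again satisfy
`lim_{ε↓0} limsup_t t⁻¹ log (K′_t(ε) e^{tγ_ε(v)}) = 0`, so `P` is a weak Gibbs measure
for `v`. -/
theorem weak_gibbs_ae_to_everywhere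
    {M : Type*} [MetricSpace M] [CompactSpace M]
    [MeasurableSpace M] [BorelSpace M]
    (φ : M → M) (hφ : Continuous φ)
    (v : M → ℝ) (hv : Continuous v) (c : ℝ)
    (P : Measure M) [IsProbabilityMeasure P]
    (hsupp : ∀ U : Set M, IsOpen U → U.Nonempty → 0 < P U)
    (K : ℕ → ℝ → ℝ)
    (hK1 : ∀ t : ℕ, 1 ≤ t → ∀ ε : ℝ, 0 < ε → 1 ≤ K t ε)
    (hKlim : Tendsto (fun ε : ℝ =>
        limsup (fun t : ℕ => (((t : ℝ)⁻¹ * Real.log (K t ε) : ℝ) : EReal)) atTop)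
      (𝓝[>] (0 : ℝ)) (nhds (0 : EReal)))
    (hGibbs : ∀ t : ℕ, 1 ≤ t → ∀ ε : ℝ, 0 < ε → ∀ᵐ x ∂P,
      ENNReal.ofReal ((K t ε)⁻¹ * Real.exp (birkhoffSumOf φ v t x - t * c))
          ≤ P (bowenBall φ t ε x)
        ∧ P (bowenBall φ t ε x)
          ≤ ENNReal.ofReal (K t ε * Real.exp (birkhoffSumOf φ v t x - t * c))) :
    (∀ x : M, ∀ t : ℕ, 1 ≤ t → ∀ ε : ℝ, 0 < ε →
      ENNReal.ofReal ((max (K t (2 * ε)) (K t (ε / 2)))⁻¹ *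
            Real.exp (birkhoffSumOf φ v t x - t * c - t * oscModulus v ε))
          ≤ P (bowenBall φ t ε x)
        ∧ P (bowenBall φ t ε x)
          ≤ ENNReal.ofReal (max (K t (2 * ε)) (K t (ε / 2)) *
              Real.exp (birkhoffSumOf φ v t x - t * c + t * oscModulus v ε)))
    ∧ Tendsto (fun ε : ℝ =>
        limsup (fun t : ℕ => (((t : ℝ)⁻¹ *
            Real.log (max (K t (2 * ε)) (K t (ε / 2)) * Real.exp (t * oscModulus v ε))
          : ℝ) : EReal)) atTop)
      (𝓝[>] (0 : ℝ)) (nhds (0 : EReal)) :=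
  weak_gibbs_ae_to_everywhere_general φ hφ v hv c P hsupp K hK1 hKlim hGibbs
end

section
/- Let φ : [0,1] → [0,1] be the tent map φ(x) = 1 − |1 − 2x| and let t ≥ 1 be an integer. Then the fixed-point set of the t-th iterate is Fix(φ^t) = { 2(j−1)/(2^t − 1) : j = 1,…,2^{t−1} } ∪ { 2j/(2^t + 1) : j = 1,…,2^{t−1} }. In particular Fix(φ^t) has exactly 2^t elements, and every x ∈ [0,1] satisfies dist(x, Fix(φ^t)) ≤ 2^{−t}. -/
/-!
Writing `‖y‖ = |y - round y|` for the distance to the nearest integer, the map `y ↦ 2‖y‖`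
conjugates doubling to the tent map: `φ (2‖y‖) = 2‖2y‖`. Since `x = 2‖x/2‖` on `[0,1]`,
this gives `φ^t x = 2‖2^t x / 2‖`, so `x` is fixed exactly when `|2^t x - 2n| = x` for some
integer `n`, i.e. when `(2^t ∓ 1) x ∈ 2ℤ`. Counting these points in `[0,1]` gives `2^t`, and
the points `2n / (2^t + 1)` alone are `2 / (2^t + 1)`-dense in `[0,1]`.
-/

/-- The tent map `φ(x) = 1 − |1 − 2x|` on `[0,1]`. -/
noncomputable def tentMap (x : ℝ) : ℝ := 1 - |1 - 2 * x|

theorem abs_sub_round_eq_of_abs_sub_le {α : Type*} [Field α] [LinearOrder α]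
    [IsStrictOrderedRing α] [FloorRing α] {y : α} {n : ℤ} (h : |y - n| ≤ 1 / 2) :
    |y - round y| = |y - n| := by
  refine (round_le y n).antisymm (not_lt.1 fun hlt => ?_)
  have hne : round y ≠ n := fun he => hlt.ne (by rw [he])
  have h1 : (1 : α) ≤ |(round y : α) - n| := by
    exact_mod_cast Int.one_le_abs (sub_ne_zero.2 hne)
  have h2 := abs_sub_le (round y : α) y n
  rw [abs_sub_comm (round y : α) y] at h2
  linarith

theorem tentMap_two_mul_abs_sub_round (y : ℝ) :
    tentMap (2 * |y - round y|) = 2 * |2 * y - round (2 * y)| := by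
  obtain ⟨hlo, hhi⟩ := abs_le.1 (abs_sub_round y)
  set r := round y
  unfold tentMap
  -- the integer nearest to `2 * y` is `2 * r`, `2 * r + 1` or `2 * r - 1`
  rcases le_total |y - r| (1 / 4) with hq | hq
  · have hq' := abs_le.1 hq
    rw [abs_sub_round_eq_of_abs_sub_le (y := 2 * y) (n := 2 * r)
      (by push_cast; rw [abs_le]; constructor <;> linarith)]
    rw [abs_of_nonneg (by linarith : 0 ≤ 1 - 2 * (2 * |y - r|))]
    push_cast
    rw [← mul_sub, abs_mul, abs_two]; ring
  rcases le_total 0 (y - r) with hs | hs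
  · rw [abs_of_nonneg hs] at hq ⊢
    rw [abs_sub_round_eq_of_abs_sub_le (y := 2 * y) (n := 2 * r + 1)
      (by push_cast; rw [abs_le]; constructor <;> linarith)]
    push_cast
    rw [abs_of_nonpos (by linarith), abs_of_nonpos (by linarith)]; ring
  · rw [abs_of_nonpos hs] at hq ⊢
    rw [abs_sub_round_eq_of_abs_sub_le (y := 2 * y) (n := 2 * r - 1)
      (by push_cast; rw [abs_le]; constructor <;> linarith)]
    push_cast
    rw [abs_of_nonpos (by linarith), abs_of_nonneg (by linarith)]; ring

theorem tentMap_iterate_two_mul_abs_sub_round (t : ℕ) (y : ℝ) :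
    tentMap^[t] (2 * |y - round y|) = 2 * |2 ^ t * y - round (2 ^ t * y)| := by
  induction t with
  | zero => simp
  | succ t ih =>
    rw [Function.iterate_succ_apply', ih, tentMap_two_mul_abs_sub_round, pow_succ', mul_assoc]

theorem tentMap_iterate_of_mem_Icc {x : ℝ} (hx : x ∈ Set.Icc 0 1) (t : ℕ) :
    tentMap^[t] x = 2 * |2 ^ t * x / 2 - round (2 ^ t * x / 2)| := by
  obtain ⟨hx0, hx1⟩ := hx
  have hx2 : 2 * |x / 2 - round (x / 2)| = x := by
    rw [abs_sub_round_eq_of_abs_sub_le (n := 0)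
      (by rw [Int.cast_zero, sub_zero, abs_le]; constructor <;> linarith)]
    rw [Int.cast_zero, sub_zero, abs_of_nonneg (by linarith)]; ring
  rw [← hx2, tentMap_iterate_two_mul_abs_sub_round, hx2, mul_div_assoc]

theorem tentMap_iterate_eq_self_iff {x : ℝ} (hx : x ∈ Set.Icc 0 1) (t : ℕ) :
    tentMap^[t] x = x ↔ ∃ n : ℤ, (2 ^ t - 1) * x = 2 * n ∨ (2 ^ t + 1) * x = 2 * n := by
  obtain ⟨hx0, hx1⟩ := hx
  rw [tentMap_iterate_of_mem_Icc ⟨hx0, hx1⟩]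
  constructor
  · intro h
    have h' : |2 ^ t * x / 2 - round (2 ^ t * x / 2)| = x / 2 := by linarith
    refine ⟨round (2 ^ t * x / 2), ?_⟩
    rcases (abs_eq (by linarith)).1 h' with h'' | h''
    · left; linarith
    · right; linarith
  · rintro ⟨n, hn | hn⟩
    · rw [abs_sub_round_eq_of_abs_sub_le (n := n) (by rw [abs_le]; constructor <;> linarith)]
      rw [abs_of_nonneg (by linarith)]; linarith
    · rw [abs_sub_round_eq_of_abs_sub_le (n := n) (by rw [abs_le]; constructor <;> linarith)]
      rw [abs_of_nonpos (by linarith)]; linarith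

theorem setOf_fixed_tentMap_iterate (t : ℕ) (ht : 1 ≤ t) :
    {x ∈ Set.Icc (0 : ℝ) 1 | tentMap^[t] x = x} =
      {x : ℝ | ∃ j : ℕ, 1 ≤ j ∧ j ≤ 2 ^ (t - 1) ∧ x = 2 * ((j : ℝ) - 1) / (2 ^ t - 1)} ∪
        {x : ℝ | ∃ j : ℕ, 1 ≤ j ∧ j ≤ 2 ^ (t - 1) ∧ x = 2 * (j : ℝ) / (2 ^ t + 1)} := by
  set M := 2 ^ (t - 1)
  have hM : 1 ≤ M := Nat.one_le_two_pow
  have hMR : (1 : ℝ) ≤ M := by exact_mod_cast hM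
  have hN : (2 : ℝ) ^ t = 2 * M := by
    rw [← pow_sub_one_mul (by omega : t ≠ 0)]; push_cast [M]; ring
  have hpos : (0 : ℝ) < 2 ^ t - 1 := by linarith
  ext x
  simp only [Set.mem_ofPred_eq, Set.mem_union]
  constructor
  · rintro ⟨⟨hx0, hx1⟩, hfix⟩
    obtain ⟨n, hn | hn⟩ := (tentMap_iterate_eq_self_iff ⟨hx0, hx1⟩ t).1 hfix <;>
      rw [hN] at hn
    · lift n to ℕ using (by exact_mod_cast (by nlinarith : (0 : ℝ) ≤ n))
      push_cast at hn
      have : 2 * n + 1 ≤ 2 * M := by exact_mod_cast (by nlinarith : (2 * n + 1 : ℝ) ≤ 2 * M)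
      refine .inl ⟨n + 1, by omega, by omega, ?_⟩
      rw [eq_div_iff hpos.ne', hN]; push_cast; linarith
    · lift n to ℕ using (by exact_mod_cast (by nlinarith : (0 : ℝ) ≤ n))
      push_cast at hn
      rcases Nat.eq_zero_or_pos n with rfl | hn0
      · refine .inl ⟨1, le_rfl, hM, ?_⟩
        have : x = 0 := by push_cast at hn; nlinarith
        simp [this]
      · have : 2 * n ≤ 2 * M + 1 := by
          exact_mod_cast (by nlinarith : (2 * n : ℝ) ≤ 2 * M + 1)
        refine .inr ⟨n, hn0, by omega, ?_⟩
        rw [eq_div_iff (by positivity), hN]; linarith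
  · rintro (⟨j, hj1, hjM, rfl⟩ | ⟨j, hj1, hjM, rfl⟩)
    all_goals
      have hj1R : (1 : ℝ) ≤ j := by exact_mod_cast hj1
      have hjMR : (j : ℝ) ≤ M := by exact_mod_cast hjM
    · have hmem : 2 * ((j : ℝ) - 1) / (2 ^ t - 1) ∈ Set.Icc (0 : ℝ) 1 :=
        ⟨by positivity, by rw [div_le_one hpos]; linarith⟩
      refine ⟨hmem, (tentMap_iterate_eq_self_iff hmem t).2 ⟨j - 1, .inl ?_⟩⟩
      push_cast; field_simp
    · have hmem : 2 * (j : ℝ) / (2 ^ t + 1) ∈ Set.Icc (0 : ℝ) 1 :=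
        ⟨by positivity, by rw [div_le_one (by positivity)]; linarith⟩
      refine ⟨hmem, (tentMap_iterate_eq_self_iff hmem t).2 ⟨j, .inr ?_⟩⟩
      push_cast; field_simp

theorem Int.mul_add_one_ne_mul_sub_one {N a b : ℤ} (ha : 0 ≤ a) (hb : 0 ≤ b)
    (hpos : 0 < a + b) (hlt : a + b < N) : a * (N + 1) ≠ b * (N - 1) := by
  intro h
  have hN : N * (b - a) = a + b := by linarith
  rcases le_or_gt (b - a) 0 with hba | hba
  · nlinarith
  · nlinarith

theorem ncard_setOf_fixed_tentMap_iterate (t : ℕ) (ht : 1 ≤ t) :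
    {x ∈ Set.Icc (0 : ℝ) 1 | tentMap^[t] x = x}.ncard = 2 ^ t := by
  rw [setOf_fixed_tentMap_iterate t ht]
  set M := 2 ^ (t - 1)
  have hNn : 2 ^ t = 2 * M := by rw [← pow_sub_one_mul (by omega : t ≠ 0)]; ring
  have hN : (2 : ℝ) ^ t = 2 * M := by exact_mod_cast hNn
  have hM : 1 ≤ M := Nat.one_le_two_pow
  have hMR : (1 : ℝ) ≤ M := by exact_mod_cast hM
  set f : ℕ → ℝ := fun j => 2 * ((j : ℝ) - 1) / (2 ^ t - 1)
  set g : ℕ → ℝ := fun j => 2 * (j : ℝ) / (2 ^ t + 1)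
  have hf : f.Injective := fun a b hab => by
    have := (div_left_inj' (by linarith : (2 : ℝ) ^ t - 1 ≠ 0)).1 hab
    exact_mod_cast (by linarith : (a : ℝ) = b)
  have hg : g.Injective := fun a b hab => by
    simp only [g] at hab
    field_simp at hab
    exact_mod_cast hab
  have hdisj : Disjoint (f '' Set.Icc 1 M) (g '' Set.Icc 1 M) := by
    rw [Set.disjoint_left]
    rintro _ ⟨j, ⟨hj1, hjM⟩, rfl⟩ ⟨k, ⟨hk1, hkM⟩, hk⟩
    simp only [f, g, hN] at hk
    rw [div_eq_div_iff (by linarith) (by linarith)] at hk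
    refine Int.mul_add_one_ne_mul_sub_one (N := 2 * M) (a := j - 1) (b := k)
      (by omega) (by omega) (by omega) (by omega) ?_
    exact_mod_cast (by linarith : ((j : ℝ) - 1) * (2 * M + 1) = k * (2 * M - 1))
  have himage (h : ℕ → ℝ) :
      {x | ∃ j : ℕ, 1 ≤ j ∧ j ≤ M ∧ x = h j} = h '' Set.Icc 1 M := by
    ext; simp [eq_comm, and_assoc]
  rw [himage f, himage g, Set.ncard_union_eq hdisj (Set.toFinite _) (Set.toFinite _),
    Set.ncard_image_of_injective _ hf, Set.ncard_image_of_injective _ hg, Set.ncard_Icc_nat]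
  omega

theorem exists_int_abs_sub_le_half_of_two_mul_le {y : ℝ} {D : ℤ} (hy : 0 ≤ y)
    (hyD : 2 * y ≤ D) : ∃ n : ℤ, 0 ≤ n ∧ 2 * n ≤ D ∧ |y - n| ≤ 1 / 2 := by
  -- `⌈y - 1/2⌉` rounds halves down, so that `2 * n ≤ D` survives the case `2 * y = D`
  have hge := Int.le_ceil (y - 1 / 2)
  have hlt := Int.ceil_lt_add_one (y - 1 / 2)
  refine ⟨⌈y - 1 / 2⌉, Int.ceil_nonneg_of_neg_one_lt (by linarith), ?_,
    abs_le.2 ⟨by linarith, by linarith⟩⟩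
  have : 2 * ⌈y - 1 / 2⌉ < D + 1 := by
    exact_mod_cast (by linarith : (2 * ⌈y - 1 / 2⌉ : ℝ) < D + 1)
  omega

theorem infDist_setOf_fixed_tentMap_iterate_le {x : ℝ} (hx : x ∈ Set.Icc (0 : ℝ) 1)
    (t : ℕ) :
    Metric.infDist x {y ∈ Set.Icc (0 : ℝ) 1 | tentMap^[t] y = y} ≤ 1 / 2 ^ t := by
  obtain ⟨hx0, hx1⟩ := hx
  have hD : (0 : ℝ) < 2 ^ t + 1 := by positivity
  obtain ⟨n, hn0, hnD, hn⟩ := exists_int_abs_sub_le_half_of_two_mul_le (D := 2 ^ t + 1)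
    (y := (2 ^ t + 1) * x / 2) (by positivity) (by push_cast; nlinarith)
  have hp : (2 * n / (2 ^ t + 1) : ℝ) ∈ {y ∈ Set.Icc (0 : ℝ) 1 | tentMap^[t] y = y} := by
    have hmem : (2 * n / (2 ^ t + 1) : ℝ) ∈ Set.Icc (0 : ℝ) 1 :=
      ⟨by positivity, by rw [div_le_one hD]; exact_mod_cast hnD⟩
    exact ⟨hmem, (tentMap_iterate_eq_self_iff hmem t).2 ⟨n, .inr (by field_simp)⟩⟩
  calc Metric.infDist x _ ≤ dist x (2 * n / (2 ^ t + 1)) := Metric.infDist_le_dist_of_mem hp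
    _ = 2 * |(2 ^ t + 1) * x / 2 - n| / (2 ^ t + 1) := by
      rw [Real.dist_eq, show x - 2 * n / (2 ^ t + 1) = 2 * ((2 ^ t + 1) * x / 2 - n) / (2 ^ t + 1)
        by field_simp, abs_div, abs_mul, abs_two, abs_of_pos hD]
    _ ≤ 1 / (2 ^ t + 1) := by gcongr; linarith
    _ ≤ 1 / 2 ^ t := by gcongr; linarith

/-- **Periodic points of the tent map.**
For every integer `t ≥ 1`, the fixed points of the `t`-th iterate of the tent map on
`[0,1]` are exactly the points `2(j−1)/(2^t−1)` and `2j/(2^t+1)` for `j = 1,…,2^{t−1}`;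
there are exactly `2^t` of them, and every `x ∈ [0,1]` is within distance `2^{−t}` of
one of them. -/
theorem tent_map_periodic_points (t : ℕ) (ht : 1 ≤ t) :
    ({x ∈ Set.Icc (0 : ℝ) 1 | tentMap^[t] x = x}
        = {x : ℝ | ∃ j : ℕ, 1 ≤ j ∧ j ≤ 2 ^ (t - 1) ∧ x = 2 * ((j : ℝ) - 1) / (2 ^ t - 1)}
          ∪ {x : ℝ | ∃ j : ℕ, 1 ≤ j ∧ j ≤ 2 ^ (t - 1) ∧ x = 2 * (j : ℝ) / (2 ^ t + 1)})
    ∧ {x ∈ Set.Icc (0 : ℝ) 1 | tentMap^[t] x = x}.ncard = 2 ^ t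
    ∧ ∀ x ∈ Set.Icc (0 : ℝ) 1,
        Metric.infDist x {y ∈ Set.Icc (0 : ℝ) 1 | tentMap^[t] y = y} ≤ 1 / 2 ^ t :=
  ⟨setOf_fixed_tentMap_iterate t ht, ncard_setOf_fixed_tentMap_iterate t ht,
    fun _ hx => infDist_setOf_fixed_tentMap_iterate_le hx t⟩
end

section
/- Let φ be the tent map φ(x) = 1 − |1 − 2x| on [0,1], set I_n := (2^{−n−1}, 2^{−n}] for n ∈ ℕ, and define the induced map ψ : [0,1) → [0,1) by ψ(0) := 0 and ψ(x) := φ^{n+1}(x) for x ∈ I_n. For a sequence t : ℕ → ℕ define X(t) := Σ_{k=0}^∞ 2^{−(t_0+⋯+t_k)} (−2)^{−k} (the series converges absolutely). Then for every t : ℕ → ℕ: (i) X(t) ∈ I_{t_0}; (ii) ψ(X(t)) = X(σ(t)), where σ is the left shift, (σ t)(k) = t(k+1); (iii) X(t) is the unique point of [0,1) whose ψ-itinerary is t, i.e., ∩_{k∈ℕ} ψ^{−k}(I_{t_k}) = { X(t) }. -/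
/-- The interval `I_n = (2^{−n−1}, 2^{−n}]` of points with first return time `n + 1`
to `I₀` under the tent map. -/
noncomputable def returnInterval (n : ℕ) : Set ℝ :=
  Set.Ioc ((2 : ℝ) ^ (-(n : ℤ) - 1)) ((2 : ℝ) ^ (-(n : ℤ)))

/-- The point `X(t) = Σ_k 2^{−(t₀+⋯+t_k)} (−2)^{−k}` with prescribed itinerary `t`
for the induced map of the tent map (the series converges absolutely). -/
noncomputable def inducedPoint (t : ℕ → ℕ) : ℝ :=
  ∑' k : ℕ, (2 : ℝ) ^ (-((∑ j ∈ Finset.range (k + 1), t j : ℕ) : ℤ)) *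
    (-2 : ℝ) ^ (-(k : ℤ))

open Finset

theorem eq_of_forall_iterate_mem_of_expanding {α ι : Type*} [MetricSpace α] {f : α → α}
    {s : ι → Set α} {c D : ℝ} (hc : 1 < c)
    (hexp : ∀ i, ∀ x ∈ s i, ∀ y ∈ s i, c * dist x y ≤ dist (f x) (f y))
    (hD : ∀ i, ∀ x ∈ s i, ∀ y ∈ s i, dist x y ≤ D) {t : ℕ → ι} {x y : α}
    (hx : ∀ k, f^[k] x ∈ s (t k)) (hy : ∀ k, f^[k] y ∈ s (t k)) : x = y := by
  have hgrow : ∀ k, c ^ k * dist x y ≤ dist (f^[k] x) (f^[k] y) := by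
    intro k
    induction k with
    | zero => simp
    | succ k ih =>
      rw [Function.iterate_succ_apply', Function.iterate_succ_apply', pow_succ', mul_assoc]
      exact (mul_le_mul_of_nonneg_left ih (by linarith)).trans (hexp _ _ (hx k) _ (hy k))
  refine dist_le_zero.1 (le_of_not_gt fun hpos => ?_)
  obtain ⟨k, hk⟩ := pow_unbounded_of_one_lt (D / dist x y) hc
  rw [div_lt_iff₀ hpos] at hk
  linarith [(hgrow k).trans (hD _ _ (hx k) _ (hy k))]

lemma returnInterval_eq (n : ℕ) :
    returnInterval n = Set.Ioc ((2⁻¹ : ℝ) ^ (n + 1)) (2⁻¹ ^ n) := by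
  rw [returnInterval, show -(n : ℤ) - 1 = -((n + 1 : ℕ) : ℤ) by push_cast; ring,
    zpow_neg, zpow_neg, zpow_natCast, zpow_natCast, inv_pow, inv_pow]

lemma returnInterval_subset_Icc (n : ℕ) : returnInterval n ⊆ Set.Icc 0 1 := by
  rw [returnInterval_eq]
  exact fun x hx => ⟨(pow_pos (by norm_num) _).le.trans hx.1.le,
    hx.2.trans (pow_le_one₀ (by norm_num) (by norm_num))⟩

lemma tentMap_of_le_half {x : ℝ} (hx : x ≤ 1 / 2) : tentMap x = 2 * x := by
  rw [tentMap, abs_of_nonneg (by linarith)]; ring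

lemma tentMap_of_half_le {x : ℝ} (hx : 1 / 2 ≤ x) : tentMap x = 2 - 2 * x := by
  rw [tentMap, abs_of_nonpos (by linarith)]; ring

lemma iterate_tentMap_of_le (n : ℕ) {x : ℝ} (hx₀ : 0 ≤ x) (hx : x ≤ 2⁻¹ ^ n) :
    tentMap^[n] x = 2 ^ n * x := by
  induction n generalizing x with
  | zero => simp
  | succ n ih =>
    have hx' : 2 * x ≤ 2⁻¹ ^ n := by
      rw [pow_succ] at hx; linarith
    rw [Function.iterate_succ_apply, tentMap_of_le_half, ih (by linarith) hx', pow_succ]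
    · ring
    · linarith [pow_le_one₀ (n := n) (by norm_num : (0 : ℝ) ≤ 2⁻¹) (by norm_num)]

lemma iterate_tentMap_of_mem_returnInterval {n : ℕ} {x : ℝ} (hx : x ∈ returnInterval n) :
    tentMap^[n + 1] x = 2 - 2 ^ (n + 1) * x := by
  rw [returnInterval_eq] at hx
  obtain ⟨hlo, hhi⟩ := hx
  have h2n : (2 : ℝ) ^ n * 2⁻¹ ^ n = 1 := by rw [← mul_pow]; norm_num
  have hhalf : 1 / 2 ≤ (2 : ℝ) ^ n * x := by
    have := mul_le_mul_of_nonneg_left hlo.le (pow_nonneg (zero_le_two (α := ℝ)) n)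
    rw [pow_succ, ← mul_assoc, h2n] at this; linarith
  rw [Function.iterate_succ_apply', iterate_tentMap_of_le n ((pow_pos (by norm_num) _).le.trans
    hlo.le) hhi, tentMap_of_half_le hhalf, pow_succ]
  ring

noncomputable def inducedTerm (t : ℕ → ℕ) (k : ℕ) : ℝ :=
  2⁻¹ ^ (∑ j ∈ range (k + 1), t j + k)

lemma inducedPoint_eq_tsum (t : ℕ → ℕ) :
    inducedPoint t = ∑' k, (-1) ^ k * inducedTerm t k := by
  refine tsum_congr fun k => ?_
  rw [inducedTerm, zpow_neg, zpow_neg, zpow_natCast, zpow_natCast, neg_pow, pow_add, mul_inv,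
    inv_pow, inv_pow, ← inv_pow (-1 : ℝ), inv_neg_one]
  ring

lemma inducedTerm_zero (t : ℕ → ℕ) : inducedTerm t 0 = 2⁻¹ ^ t 0 := by
  simp [inducedTerm]

lemma inducedTerm_succ (t : ℕ → ℕ) (k : ℕ) :
    inducedTerm t (k + 1) = 2⁻¹ ^ (t 0 + 1) * inducedTerm (fun j => t (j + 1)) k := by
  rw [inducedTerm, inducedTerm, sum_range_succ', ← pow_add]
  ring_nf

lemma inducedTerm_strictAnti (t : ℕ → ℕ) : StrictAnti (inducedTerm t) :=
  strictAnti_nat_of_succ_lt fun k => pow_lt_pow_right_of_lt_one₀ (by norm_num) (by norm_num)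
    (by rw [sum_range_succ _ (k + 1)]; omega)

lemma inducedTerm_le (t : ℕ → ℕ) (k : ℕ) : inducedTerm t k ≤ 2⁻¹ ^ k :=
  pow_le_pow_of_le_one (by norm_num) (by norm_num) (by omega)

lemma summable_inducedTerm (t : ℕ → ℕ) : Summable (inducedTerm t) :=
  (summable_geometric_of_lt_one (by norm_num) (by norm_num : (2⁻¹ : ℝ) < 1)).of_nonneg_of_le
    (fun k => by rw [inducedTerm]; positivity) (inducedTerm_le t)

lemma inducedPoint_eq_sub_mul_shift (t : ℕ → ℕ) :
    inducedPoint t = 2⁻¹ ^ t 0 - 2⁻¹ ^ (t 0 + 1) * inducedPoint (fun k => t (k + 1)) := by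
  simp only [inducedPoint_eq_tsum]
  rw [(summable_inducedTerm t).alternating.tsum_eq_zero_add, inducedTerm_zero, pow_zero, one_mul,
    ← tsum_mul_left, sub_eq_add_neg, ← tsum_neg]
  exact congrArg _ (tsum_congr fun k => by rw [inducedTerm_succ, pow_succ]; ring)

lemma inducedPoint_mem_Ico (t : ℕ → ℕ) : inducedPoint t ∈ Set.Ico 0 1 := by
  have hlim := (summable_inducedTerm t).tendsto_alternating_series_tsum
  have hanti := inducedTerm_strictAnti t
  have hlo := hanti.antitone.alternating_series_le_tendsto hlim 1
  have hhi := hanti.antitone.tendsto_le_alternating_series hlim 1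
  norm_num [sum_range_succ] at hlo hhi
  have h01 := hanti zero_lt_one
  have h12 := hanti one_lt_two
  have h0 : inducedTerm t 0 ≤ 1 := (inducedTerm_le t 0).trans_eq (pow_zero _)
  rw [inducedPoint_eq_tsum]
  exact ⟨by linarith, by linarith⟩

lemma inducedPoint_mem_returnInterval (t : ℕ → ℕ) : inducedPoint t ∈ returnInterval (t 0) := by
  obtain ⟨h0, h1⟩ := inducedPoint_mem_Ico (fun k => t (k + 1))
  have hpos : (0 : ℝ) < 2⁻¹ ^ t 0 := by positivity
  rw [returnInterval_eq, inducedPoint_eq_sub_mul_shift, pow_succ]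
  constructor <;> nlinarith [mul_pos hpos (sub_pos.2 h1), mul_nonneg hpos.le h0]

lemma apply_of_mem_returnInterval {ψ : ℝ → ℝ}
    (hψ : ∀ n, ∀ x ∈ returnInterval n, ψ x = tentMap^[n + 1] x)
    {n : ℕ} {x : ℝ} (hx : x ∈ returnInterval n) : ψ x = 2 - 2 ^ (n + 1) * x := by
  rw [hψ n x hx, iterate_tentMap_of_mem_returnInterval hx]

lemma apply_inducedPoint {ψ : ℝ → ℝ}
    (hψ : ∀ n, ∀ x ∈ returnInterval n, ψ x = tentMap^[n + 1] x) (t : ℕ → ℕ) :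
    ψ (inducedPoint t) = inducedPoint (fun k => t (k + 1)) := by
  rw [apply_of_mem_returnInterval hψ (inducedPoint_mem_returnInterval t),
    inducedPoint_eq_sub_mul_shift t, pow_succ, pow_succ]
  have h : (2 : ℝ) ^ t 0 * 2⁻¹ ^ t 0 = 1 := by rw [← mul_pow]; norm_num
  linear_combination (inducedPoint (fun k => t (k + 1)) - 2) * h

lemma iterate_apply_inducedPoint_mem {ψ : ℝ → ℝ}
    (hψ : ∀ n, ∀ x ∈ returnInterval n, ψ x = tentMap^[n + 1] x) (t : ℕ → ℕ) (k : ℕ) :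
    ψ^[k] (inducedPoint t) ∈ returnInterval (t k) := by
  induction k generalizing t with
  | zero => exact inducedPoint_mem_returnInterval t
  | succ k ih =>
    rw [Function.iterate_succ_apply, apply_inducedPoint hψ]
    exact ih (fun j => t (j + 1))

lemma two_mul_dist_le_dist_apply {ψ : ℝ → ℝ}
    (hψ : ∀ n, ∀ x ∈ returnInterval n, ψ x = tentMap^[n + 1] x)
    (n : ℕ) (x : ℝ) (hx : x ∈ returnInterval n) (y : ℝ) (hy : y ∈ returnInterval n) :
    2 * dist x y ≤ dist (ψ x) (ψ y) := by
  rw [apply_of_mem_returnInterval hψ hx, apply_of_mem_returnInterval hψ hy, Real.dist_eq,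
    Real.dist_eq, show 2 - 2 ^ (n + 1) * x - (2 - 2 ^ (n + 1) * y) = 2 ^ (n + 1) * (y - x) by ring,
    abs_mul, abs_pow, abs_two, abs_sub_comm]
  gcongr
  exact le_self_pow₀ one_le_two (by omega)

theorem tent_map_inducing_general
    (ψ : ℝ → ℝ)
    (hψ : ∀ (n : ℕ), ∀ x ∈ returnInterval n, ψ x = tentMap^[n + 1] x)
    (t : ℕ → ℕ) :
    inducedPoint t ∈ returnInterval (t 0)
    ∧ ψ (inducedPoint t) = inducedPoint (fun k => t (k + 1))
    ∧ {x : ℝ | ∀ k : ℕ, ψ^[k] x ∈ returnInterval (t k)} = {inducedPoint t} := by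
  refine ⟨inducedPoint_mem_returnInterval t, apply_inducedPoint hψ t,
    Set.eq_singleton_iff_unique_mem.2 ⟨iterate_apply_inducedPoint_mem hψ t, fun x hx => ?_⟩⟩
  exact eq_of_forall_iterate_mem_of_expanding one_lt_two (two_mul_dist_le_dist_apply hψ)
    (fun n x hx y hy => Real.dist_le_of_mem_Icc_01 (returnInterval_subset_Icc n hx)
      (returnInterval_subset_Icc n hy)) hx (iterate_apply_inducedPoint_mem hψ t)

/-- **Inducing scheme for the tent map.**
Let `ψ` be the induced (first-return type) map of the tent map: `ψ(0) = 0` and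
`ψ(x) = φ^{n+1}(x)` for `x ∈ I_n = (2^{−n−1}, 2^{−n}]`.  Then for every itinerary
`t : ℕ → ℕ`: (i) `X(t) ∈ I_{t₀}`; (ii) `ψ(X(t)) = X(σ t)` where `σ` is the left
shift; (iii) `X(t)` is the unique point whose `ψ`-itinerary is `t`, i.e.
`∩_k ψ^{−k}(I_{t_k}) = {X(t)}`. -/
theorem tent_map_inducing
    (ψ : ℝ → ℝ) (hψ0 : ψ 0 = 0)
    (hψ : ∀ (n : ℕ), ∀ x ∈ returnInterval n, ψ x = tentMap^[n + 1] x)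
    (t : ℕ → ℕ) :
    inducedPoint t ∈ returnInterval (t 0)
    ∧ ψ (inducedPoint t) = inducedPoint (fun k => t (k + 1))
    ∧ {x : ℝ | ∀ k : ℕ, ψ^[k] x ∈ returnInterval (t k)} = {inducedPoint t} :=
  tent_map_inducing_general ψ hψ t
end

section
/- Let A be a finite set with N ≥ 2 elements, let P and P̂ be irreducible row-stochastic N×N matrices with matching zero pattern (P_{xy} = 0 ⇔ P̂_{xy} = 0 for all x,y ∈ A), and let p, p̂ be probability vectors on A with strictly positive entries. For α ∈ ℝ define Q(α)_{xy} := P_{xy}^{1−α} P̂_{xy}^{α} (equal to 0 on the common zero pattern), q(α)_x := p_x^{1−α} p̂_x^{α}, and for t ≥ 1 the Rényi entropy e_t(α) := log Σ_{(x_1,…,x_t)∈A^t} (p_{x_1} P_{x_1x_2} ⋯ P_{x_{t−1}x_t})^{1−α} (p̂_{x_1} P̂_{x_1x_2} ⋯ P̂_{x_{t−1}x_t})^{α}. Then e_t(α) = log( q(α) Q(α)^{t−1} 𝟙 ) with 𝟙 the all-ones column vector, the matrix Q(α) is irreducible with strictly positive spectral radius r(α), and the entropic pressure exists as a limit: lim_{t→∞}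 t^{−1} e_t(α) = log r(α). -/
/-!
Along a path the Rényi integrand factorises as `q(α)_{x₀} ∏ᵢ Q(α)_{xᵢ xᵢ₊₁}`, so the sum over
paths is `q(α) Q(α)ᵗ 𝟙`; and `Q(α)` has the same positive entries as `P`, hence is irreducible.
For a nonnegative matrix `M` and a positive vector `v`, `v Mᵗ 𝟙` lies between constant multiples
of the ℓ∞ operator norm of `Mᵗ`, so by Gelfand's formula its `t`-th root tends to the spectral
radius `r`. Irreducibility gives a positive diagonal entry `δ = (Mᵏ)ₓₓ`, and
`(M^{km})ₓₓ ≥ δᵐ` forces `r ≥ δ^{1/k} > 0`, so the logarithm may be taken.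
-/

open Filter Topology

namespace Real

theorem rpow_one_sub_mul_rpow_pos_iff {a b : ℝ} (ha : 0 ≤ a) (hb : 0 ≤ b) (hab : a = 0 ↔ b = 0)
    (α : ℝ) : 0 < a ^ (1 - α) * b ^ α ↔ 0 < a := by
  rcases ha.eq_or_lt with rfl | ha
  · rcases eq_or_ne α 0 with rfl | hα
    · simp
    · simp [hab.1 rfl, zero_rpow hα]
  · have hb : 0 < b := hb.lt_of_ne' fun h => ha.ne' (hab.2 h)
    exact iff_of_true (by positivity) ha

theorem prod_rpow_mul_prod_rpow {ι : Type*} (s : Finset ι) {f g : ι → ℝ}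
    (hf : ∀ i ∈ s, 0 ≤ f i) (hg : ∀ i ∈ s, 0 ≤ g i) (a b : ℝ) :
    (∏ i ∈ s, f i) ^ a * (∏ i ∈ s, g i) ^ b = ∏ i ∈ s, f i ^ a * g i ^ b := by
  rw [← finsetProd_rpow s f hf, ← finsetProd_rpow s g hg, Finset.prod_mul_distrib]

end Real

theorem Filter.Tendsto.rpow_one_div_of_le_mul_of_le_mul {u s : ℕ → ℝ} {r c C : ℝ}
    (hu : Tendsto (fun n : ℕ => u n ^ (1 / n : ℝ)) atTop (𝓝 r)) (hu0 : ∀ n, 0 ≤ u n)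
    (hc : 0 < c) (hC : 0 < C) (hlow : ∀ n, c * u n ≤ s n) (hup : ∀ n, s n ≤ C * u n) :
    Tendsto (fun n : ℕ => s n ^ (1 / n : ℝ)) atTop (𝓝 r) := by
  have hconst {a : ℝ} (ha : 0 < a) :
      Tendsto (fun n : ℕ => a ^ (1 / n : ℝ) * u n ^ (1 / n : ℝ)) atTop (𝓝 r) := by
    have ha1 : Tendsto (fun n : ℕ => a ^ (1 / n : ℝ)) atTop (𝓝 1) := by
      simpa using tendsto_const_nhds.rpow tendsto_one_div_atTop_nhds_zero_nat (Or.inl ha.ne')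
    simpa using ha1.mul hu
  refine tendsto_of_tendsto_of_tendsto_of_le_of_le (hconst hc) (hconst hC) (fun n => ?_) fun n => ?_
  · rw [← Real.mul_rpow hc.le (hu0 n)]
    exact Real.rpow_le_rpow (by positivity [hu0 n]) (hlow n) (by positivity)
  · rw [← Real.mul_rpow hC.le (hu0 n)]
    exact Real.rpow_le_rpow ((mul_nonneg hc.le (hu0 n)).trans (hlow n)) (hup n) (by positivity)

theorem tendsto_inv_add_one_mul_log_of_tendsto_rpow {s : ℕ → ℝ} {r : ℝ} (hr : 0 < r)
    (hs0 : ∀ n, 0 ≤ s n) (hs : Tendsto (fun n : ℕ => s n ^ (1 / n : ℝ)) atTop (𝓝 r)) :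
    Tendsto (fun n : ℕ => ((n : ℝ) + 1)⁻¹ * Real.log (s n)) atTop (𝓝 (Real.log r)) := by
  have hlog : Tendsto (fun n : ℕ => (n : ℝ) / (n + 1) * Real.log (s n ^ (1 / n : ℝ))) atTop
      (𝓝 (Real.log r)) := by
    simpa using (tendsto_natCast_div_add_atTop (1 : ℝ)).mul
      ((Real.continuousAt_log hr.ne').tendsto.comp hs)
  refine hlog.congr' ?_
  filter_upwards [hs.eventually (lt_mem_nhds hr), eventually_ge_atTop 1] with n hpos hn
  have hn' : (n : ℝ) ≠ 0 := by positivity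
  have hsn : 0 < s n := (hs0 n).lt_of_ne' fun h => by simp [h, hn'] at hpos
  rw [Real.log_rpow hsn]
  field_simp

namespace Matrix

theorem IsIrreducible.of_pos_iff {n R : Type*} [Ring R] [LinearOrder R] {M N : Matrix n n R}
    (hM : M.IsIrreducible) (hN : ∀ i j, 0 ≤ N i j) (h : ∀ i j, 0 < M i j ↔ 0 < N i j) :
    N.IsIrreducible := by
  have : toQuiver M = toQuiver N := by
    unfold toQuiver
    simp_rw [h]
  exact ⟨hN, this ▸ hM.connected⟩

variable {A : Type*} [Fintype A] [DecidableEq A]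

theorem sum_path_prod_eq_sum_vecMul_pow {R : Type*} [CommSemiring R]
    (M : Matrix A A R) (f : A → R) (t : ℕ) :
    ∑ x : Fin (t + 1) → A, f (x 0) * ∏ i : Fin t, M (x i.castSucc) (x i.succ)
      = ∑ b, (f ᵥ* M ^ t) b := by
  induction t generalizing f with
  | zero =>
    rw [pow_zero, vecMul_one]
    exact Fintype.sum_equiv (Equiv.funUnique (Fin 1) A) _ _ fun x => by simp
  | succ t ih =>
    rw [pow_succ', ← vecMul_vecMul, ← ih, ← (Fin.consEquiv fun _ => A).sum_comp,
      Fintype.sum_prod_type, Finset.sum_comm]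
    refine Finset.sum_congr rfl fun y _ => ?_
    simp only [Fin.consEquiv_apply, Fin.cons_zero, Fin.prod_univ_succ, Fin.castSucc_zero,
      Fin.cons_succ, ← Fin.succ_castSucc, vecMul, dotProduct, Finset.sum_mul]
    exact Finset.sum_congr rfl fun a _ => by ring

theorem sum_path_prod_eq_sum_sum_mul_pow {R : Type*} [CommSemiring R]
    (M : Matrix A A R) (f : A → R) (t : ℕ) :
    ∑ x : Fin (t + 1) → A, f (x 0) * ∏ i : Fin t, M (x i.castSucc) (x i.succ)
      = ∑ a, ∑ b, f a * (M ^ t) a b := by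
  rw [Finset.sum_comm]
  exact sum_path_prod_eq_sum_vecMul_pow M f t

theorem apply_self_pow_le_pow_apply {R : Type*} [CommSemiring R] [PartialOrder R]
    [IsOrderedRing R] {N : Matrix A A R} (hN : ∀ i j, 0 ≤ N i j) (x : A) (m : ℕ) :
    N x x ^ m ≤ (N ^ m) x x := by
  induction m with
  | zero => simp
  | succ m ih =>
    rw [pow_succ, pow_succ, mul_apply]
    calc N x x ^ m * N x x ≤ (N ^ m) x x * N x x := by gcongr; exact hN x x
      _ ≤ ∑ z, (N ^ m) x z * N z x :=
        Finset.single_le_sum (f := fun z => (N ^ m) x z * N z x)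
          (fun z _ => mul_nonneg (pow_apply_nonneg hN m x z) (hN z x)) (Finset.mem_univ x)

end Matrix

theorem renyi_path_sum_eq_sum_sum_mul_pow {A : Type*} [Fintype A] [DecidableEq A]
    {P Phat Q : Matrix A A ℝ} {p phat q : A → ℝ} {α : ℝ}
    (hP : ∀ x y, 0 ≤ P x y) (hPhat : ∀ x y, 0 ≤ Phat x y)
    (hp : ∀ x, 0 ≤ p x) (hphat : ∀ x, 0 ≤ phat x)
    (hQ : ∀ x y, Q x y = P x y ^ (1 - α) * Phat x y ^ α)
    (hq : ∀ x, q x = p x ^ (1 - α) * phat x ^ α) (t : ℕ) :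
    ∑ x : Fin (t + 1) → A,
        (p (x 0) * ∏ i : Fin t, P (x i.castSucc) (x i.succ)) ^ (1 - α) *
          (phat (x 0) * ∏ i : Fin t, Phat (x i.castSucc) (x i.succ)) ^ α
      = ∑ x, ∑ y, q x * (Q ^ t) x y := by
  rw [← Matrix.sum_path_prod_eq_sum_sum_mul_pow]
  refine Finset.sum_congr rfl fun x _ => ?_
  rw [Real.mul_rpow (hp _) (Finset.prod_nonneg fun _ _ => hP _ _),
    Real.mul_rpow (hphat _) (Finset.prod_nonneg fun _ _ => hPhat _ _), mul_mul_mul_comm,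
    Real.prod_rpow_mul_prod_rpow _ (fun _ _ => hP _ _) (fun _ _ => hPhat _ _), hq]
  simp only [hQ]

section LinftyOpNorm

attribute [local instance] Matrix.linftyOpNormedRing Matrix.linftyOpNormedAlgebra
  Matrix.linftyOpSeminormedAddCommGroup

namespace Matrix

section Norms

variable {m n α β : Type*} [Fintype m] [Fintype n]
  [SeminormedAddCommGroup α] [SeminormedAddCommGroup β]

theorem sum_norm_le_linfty_opNorm (N : Matrix m n α) (i : m) : ∑ j, ‖N i j‖ ≤ ‖N‖ := by
  rw [linfty_opNorm_def]
  have := Finset.le_sup (f := fun i => ∑ j, ‖N i j‖₊) (Finset.mem_univ i)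
  exact (NNReal.coe_le_coe.2 this).trans_eq' (by push_cast; rfl)

theorem linfty_opNorm_le_sum_sum_norm (N : Matrix m n α) : ‖N‖ ≤ ∑ i, ∑ j, ‖N i j‖ := by
  rw [linfty_opNorm_def]
  have := Finset.sup_le (s := Finset.univ) fun i _ => Finset.single_le_sum
    (f := fun i => ∑ j, ‖N i j‖₊) (fun _ _ => zero_le) (Finset.mem_univ i)
  exact (NNReal.coe_le_coe.2 this).trans_eq (by push_cast; rfl)

theorem linfty_opNorm_map {f : α → β} (hf : ∀ a, ‖f a‖ = ‖a‖) (N : Matrix m n α) :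
    ‖N.map f‖ = ‖N‖ := by
  have hf' : ∀ a, ‖f a‖₊ = ‖a‖₊ := fun a => NNReal.eq (hf a)
  simp only [linfty_opNorm_def, map_apply, hf']

theorem sum_sum_mul_le_sum_mul_linfty_opNorm {N : Matrix m n ℝ} (hN : ∀ i j, 0 ≤ N i j)
    {v : m → ℝ} (hv : ∀ i, 0 ≤ v i) : ∑ i, ∑ j, v i * N i j ≤ (∑ i, v i) * ‖N‖ := by
  simp_rw [← Finset.mul_sum, Finset.sum_mul]
  refine Finset.sum_le_sum fun i _ => mul_le_mul_of_nonneg_left ?_ (hv i)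
  simpa only [Real.norm_of_nonneg (hN i _)] using sum_norm_le_linfty_opNorm N i

theorem mul_linfty_opNorm_le_sum_sum_mul {N : Matrix m n ℝ} (hN : ∀ i j, 0 ≤ N i j)
    {v : m → ℝ} {c : ℝ} (hc : 0 ≤ c) (hv : ∀ i, c ≤ v i) :
    c * ‖N‖ ≤ ∑ i, ∑ j, v i * N i j := by
  calc c * ‖N‖ ≤ c * ∑ i, ∑ j, N i j := by
        gcongr
        simpa only [Real.norm_of_nonneg (hN _ _)] using linfty_opNorm_le_sum_sum_norm N
    _ ≤ ∑ i, ∑ j, v i * N i j := by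
        simp_rw [Finset.mul_sum]
        gcongr with i _ j _
        exacts [hN i j, hv i]

end Norms

variable {A : Type*} [Fintype A] [DecidableEq A]

theorem spectralRadius_map_ofReal_ne_top [Nonempty A] (M : Matrix A A ℝ) :
    spectralRadius ℂ (M.map (Complex.ofReal ·)) ≠ ⊤ :=
  ne_top_of_le_ne_top ENNReal.coe_ne_top (spectrum.spectralRadius_le_nnnorm _)

theorem tendsto_linfty_opNorm_pow_rpow_spectralRadius_toReal [Nonempty A] (M : Matrix A A ℝ) :
    Tendsto (fun n : ℕ => ‖M ^ n‖ ^ (1 / n : ℝ)) atTop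
      (𝓝 (spectralRadius ℂ (M.map (Complex.ofReal ·))).toReal) := by
  have hpow (n : ℕ) : M.map (Complex.ofReal ·) ^ n = (M ^ n).map (Complex.ofReal ·) :=
    (map_pow Complex.ofRealHom.mapMatrix M n).symm
  have hgelfand := (ENNReal.tendsto_toReal (spectralRadius_map_ofReal_ne_top M)).comp
    (spectrum.pow_norm_pow_one_div_tendsto_nhds_spectralRadius (M.map (Complex.ofReal ·)))
  refine hgelfand.congr fun n => ?_
  simp only [Function.comp_apply, hpow, linfty_opNorm_map Complex.norm_real]
  exact ENNReal.toReal_ofReal (by positivity)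

theorem pow_apply_self_rpow_le_spectralRadius_toReal {M : Matrix A A ℝ} (hM : ∀ i j, 0 ≤ M i j)
    {k : ℕ} (hk : 0 < k) (x : A) :
    (M ^ k) x x ^ (1 / k : ℝ) ≤ (spectralRadius ℂ (M.map (Complex.ofReal ·))).toReal := by
  have : Nonempty A := ⟨x⟩
  have hkm : Tendsto (fun m : ℕ => k * m) atTop atTop :=
    tendsto_atTop_mono (fun m => Nat.le_mul_of_pos_left m hk) tendsto_id
  refine ge_of_tendsto ((tendsto_linfty_opNorm_pow_rpow_spectralRadius_toReal M).comp hkm)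
    ((eventually_ge_atTop 1).mono fun m hm => ?_)
  have hδ : 0 ≤ (M ^ k) x x := pow_apply_nonneg hM k x x
  have hdiag : (M ^ k) x x ^ m ≤ ‖M ^ (k * m)‖ :=
    calc (M ^ k) x x ^ m ≤ ((M ^ k) ^ m) x x :=
          apply_self_pow_le_pow_apply (pow_apply_nonneg hM k) x m
      _ ≤ ∑ y, ‖(M ^ (k * m)) x y‖ := by
        rw [← pow_mul]
        exact (Real.le_norm_self _).trans (Finset.single_le_sum
          (f := fun y => ‖(M ^ (k * m)) x y‖) (fun _ _ => norm_nonneg _) (Finset.mem_univ x))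
      _ ≤ ‖M ^ (k * m)‖ := sum_norm_le_linfty_opNorm _ x
  calc (M ^ k) x x ^ (1 / k : ℝ) = ((M ^ k) x x ^ m) ^ (1 / (k * m : ℕ) : ℝ) := by
        rw [← Real.rpow_natCast, ← Real.rpow_mul hδ]
        congr 1
        push_cast
        field_simp
    _ ≤ ‖M ^ (k * m)‖ ^ (1 / (k * m : ℕ) : ℝ) := by gcongr

theorem IsIrreducible.spectralRadius_toReal_pos [Nonempty A] {M : Matrix A A ℝ}
    (hM : M.IsIrreducible) : 0 < (spectralRadius ℂ (M.map (Complex.ofReal ·))).toReal := by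
  obtain ⟨x⟩ := ‹Nonempty A›
  obtain ⟨k, hk, hpos⟩ := (isIrreducible_iff_exists_pow_pos hM.nonneg).1 hM x x
  exact (Real.rpow_pos_of_pos hpos _).trans_le
    (pow_apply_self_rpow_le_spectralRadius_toReal hM.nonneg hk x)

theorem IsIrreducible.tendsto_inv_add_one_mul_log_sum_sum_mul_pow [Nonempty A]
    {M : Matrix A A ℝ} (hM : M.IsIrreducible) {v : A → ℝ} (hv : ∀ i, 0 < v i) :
    Tendsto (fun t : ℕ => ((t : ℝ) + 1)⁻¹ * Real.log (∑ i, ∑ j, v i * (M ^ t) i j)) atTop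
      (𝓝 (Real.log (spectralRadius ℂ (M.map (Complex.ofReal ·))).toReal)) := by
  obtain ⟨i₀, -, hmin⟩ := Finset.exists_min_image Finset.univ v Finset.univ_nonempty
  have hpow := pow_apply_nonneg hM.nonneg
  refine tendsto_inv_add_one_mul_log_of_tendsto_rpow hM.spectralRadius_toReal_pos
    (fun t => Finset.sum_nonneg fun i _ => Finset.sum_nonneg fun j _ =>
      mul_nonneg (hv i).le (hpow t i j)) ?_
  exact (tendsto_linfty_opNorm_pow_rpow_spectralRadius_toReal M).rpow_one_div_of_le_mul_of_le_mul
    (fun _ => norm_nonneg _) (hv i₀) (Finset.sum_pos (fun i _ => hv i) Finset.univ_nonempty)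
    (fun t => mul_linfty_opNorm_le_sum_sum_mul (hpow t) (hv i₀).le fun i => hmin i (by simp))
    (fun t => sum_sum_mul_le_sum_mul_linfty_opNorm (hpow t) fun i => (hv i).le)

end Matrix

end LinftyOpNorm

theorem markov_chain_entropic_pressure_general
    {A : Type*} [Fintype A] [DecidableEq A] (hcard : 2 ≤ Fintype.card A)
    (P Phat : Matrix A A ℝ)
    (hPnonneg : ∀ x y, 0 ≤ P x y)
    (hPhatnonneg : ∀ x y, 0 ≤ Phat x y)
    (hPirr : ∀ x y, ∃ k : ℕ, 1 ≤ k ∧ 0 < (P ^ k) x y)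
    (hzero : ∀ x y, P x y = 0 ↔ Phat x y = 0)
    (p phat : A → ℝ)
    (hppos : ∀ x, 0 < p x)
    (hphatpos : ∀ x, 0 < phat x)
    (Q : ℝ → Matrix A A ℝ)
    (hQ : ∀ α x y, Q α x y = P x y ^ (1 - α) * Phat x y ^ α)
    (q : ℝ → A → ℝ)
    (hq : ∀ α x, q α x = p x ^ (1 - α) * phat x ^ α)
    (et : ℝ → ℕ → ℝ)
    (het : ∀ α t, et α t = Real.log (∑ x : Fin (t + 1) → A,
        (p (x 0) * ∏ i : Fin t, P (x i.castSucc) (x i.succ)) ^ (1 - α) *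
          (phat (x 0) * ∏ i : Fin t, Phat (x i.castSucc) (x i.succ)) ^ α))
    (α : ℝ) :
    (∀ t : ℕ, et α t = Real.log (∑ x : A, ∑ y : A, q α x * (Q α ^ t) x y))
    ∧ (∀ x y : A, ∃ k : ℕ, 1 ≤ k ∧ 0 < (Q α ^ k) x y)
    ∧ ∃ rα : ℝ, 0 < rα
        ∧ spectralRadius ℂ ((Q α).map (Complex.ofReal ·)) = ENNReal.ofReal rα
        ∧ Filter.Tendsto (fun t : ℕ => ((t : ℝ) + 1)⁻¹ * et α t)
            Filter.atTop (nhds (Real.log rα)) := by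
  have : Nonempty A := Fintype.card_pos_iff.mp (by omega)
  have hQnonneg : ∀ x y, 0 ≤ Q α x y := fun x y => by
    rw [hQ]
    exact mul_nonneg (Real.rpow_nonneg (hPnonneg x y) _) (Real.rpow_nonneg (hPhatnonneg x y) _)
  have hQirr : (Q α).IsIrreducible :=
    ((Matrix.isIrreducible_iff_exists_pow_pos hPnonneg).2 hPirr).of_pos_iff hQnonneg fun x y => by
      rw [hQ, Real.rpow_one_sub_mul_rpow_pos_iff (hPnonneg x y) (hPhatnonneg x y) (hzero x y)]
  have hrenyi (t : ℕ) : et α t = Real.log (∑ x : A, ∑ y : A, q α x * (Q α ^ t) x y) := by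
    rw [het, renyi_path_sum_eq_sum_sum_mul_pow hPnonneg hPhatnonneg (fun x => (hppos x).le)
      (fun x => (hphatpos x).le) (hQ α) (hq α)]
  refine ⟨hrenyi, (Matrix.isIrreducible_iff_exists_pow_pos hQnonneg).1 hQirr, _,
    hQirr.spectralRadius_toReal_pos,
    (ENNReal.ofReal_toReal (Matrix.spectralRadius_map_ofReal_ne_top _)).symm, ?_⟩
  simpa only [hrenyi] using hQirr.tendsto_inv_add_one_mul_log_sum_sum_mul_pow
    fun x => by
      rw [hq]
      exact mul_pos (Real.rpow_pos_of_pos (hppos x) _) (Real.rpow_pos_of_pos (hphatpos x) _)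

/-- **Entropic pressure of a pair of finite-state Markov chains.**
Let `A` be a finite set with at least 2 elements, `P`, `P̂` irreducible row-stochastic
matrices with matching zero pattern, and `p`, `p̂` strictly positive probability
vectors.  For `α ∈ ℝ` set `Q(α)_{xy} = P_{xy}^{1−α} P̂_{xy}^{α}`,
`q(α)_x = p_x^{1−α} p̂_x^{α}`, and let `e_t(α)` be the Rényi relative `α`-entropy of
the `t`-step path measures (here paths of length `t+1`, i.e. `t` transitions).
Then `e_t(α) = log (q(α) Q(α)^t 𝟙)`, the matrix `Q(α)` is irreducible, and its
spectral radius `r(α)` (the maximal modulus of its complex eigenvalues) is strictly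
positive, with `lim_t t⁻¹ e_t(α) = log r(α)`. -/
theorem markov_chain_entropic_pressure
    {A : Type*} [Fintype A] [DecidableEq A] (hcard : 2 ≤ Fintype.card A)
    (P Phat : Matrix A A ℝ)
    (hPnonneg : ∀ x y, 0 ≤ P x y) (hProw : ∀ x, ∑ y, P x y = 1)
    (hPhatnonneg : ∀ x y, 0 ≤ Phat x y) (hPhatrow : ∀ x, ∑ y, Phat x y = 1)
    (hPirr : ∀ x y, ∃ k : ℕ, 1 ≤ k ∧ 0 < (P ^ k) x y)
    (hPhatirr : ∀ x y, ∃ k : ℕ, 1 ≤ k ∧ 0 < (Phat ^ k) x y)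
    (hzero : ∀ x y, P x y = 0 ↔ Phat x y = 0)
    (p phat : A → ℝ)
    (hppos : ∀ x, 0 < p x) (hpsum : ∑ x, p x = 1)
    (hphatpos : ∀ x, 0 < phat x) (hphatsum : ∑ x, phat x = 1)
    (Q : ℝ → Matrix A A ℝ)
    (hQ : ∀ α x y, Q α x y = P x y ^ (1 - α) * Phat x y ^ α)
    (q : ℝ → A → ℝ)
    (hq : ∀ α x, q α x = p x ^ (1 - α) * phat x ^ α)
    (et : ℝ → ℕ → ℝ)
    (het : ∀ α t, et α t = Real.log (∑ x : Fin (t + 1) → A,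
        (p (x 0) * ∏ i : Fin t, P (x i.castSucc) (x i.succ)) ^ (1 - α) *
          (phat (x 0) * ∏ i : Fin t, Phat (x i.castSucc) (x i.succ)) ^ α))
    (α : ℝ) :
    (∀ t : ℕ, et α t = Real.log (∑ x : A, ∑ y : A, q α x * (Q α ^ t) x y))
    ∧ (∀ x y : A, ∃ k : ℕ, 1 ≤ k ∧ 0 < (Q α ^ k) x y)
    ∧ ∃ rα : ℝ, 0 < rα
        ∧ spectralRadius ℂ ((Q α).map (Complex.ofReal ·)) = ENNReal.ofReal rα
        ∧ Filter.Tendsto (fun t : ℕ => ((t : ℝ) + 1)⁻¹ * et α t)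
            Filter.atTop (nhds (Real.log rα)) :=
  markov_chain_entropic_pressure_general hcard P Phat hPnonneg hPhatnonneg hPirr hzero p phat hppos
    hphatpos Q hQ q hq et het α
end
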